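/- arXiv:2406.07335 — 6 statements merged into one kernel-verified Lean document; each statement's English description precedes it below -/
import Mathlib

section
/- Let p, p̃ ∈ [0,1] and let x = (x₁,x₂,u) and x̃ = (x̃₁,x̃₂,ũ) be configurations with p̃ ≤ p, x̃₁ ≤ x₁ and x̃₂ ≥ x₂. Then for all t ≥ 0, Pr[T₁(p,x) ≤ t] ≥ Pr[T₁(p̃,x̃) ≤ t], where T₁(p,x) denotes the first time s ≥ 0 at which X₁(s) = n for the chain USD_p started from x. -/
open MeasureTheory

/-- The one-step transition probability of the stubborn undecided-state dynamics `USD_p`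
with `n` agents, from configuration `c = (x₁, x₂, u)` to configuration `d`. -/
noncomputable def usdStep (n : ℕ) (p : ℝ) (c d : ℕ × ℕ × ℕ) : ℝ :=
  (if d = (c.1 - 1, c.2.1, c.2.2 + 1) then (1 - p) * (c.1 : ℝ) * (c.2.1 : ℝ) / (n : ℝ) ^ 2 else 0) +
  (if d = (c.1, c.2.1 - 1, c.2.2 + 1) then (c.1 : ℝ) * (c.2.1 : ℝ) / (n : ℝ) ^ 2 else 0) +
  (if d = (c.1 + 1, c.2.1, c.2.2 - 1) then (c.2.2 : ℝ) * (c.1 : ℝ) / (n : ℝ) ^ 2 else 0) +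
  (if d = (c.1, c.2.1 + 1, c.2.2 - 1) then (c.2.2 : ℝ) * (c.2.1 : ℝ) / (n : ℝ) ^ 2 else 0) +
  (if d = c then
    1 - ((2 - p) * (c.1 : ℝ) * (c.2.1 : ℝ) + (c.2.2 : ℝ) * ((c.1 : ℝ) + (c.2.1 : ℝ))) / (n : ℝ) ^ 2
  else 0)

/-- `μ` is the law of the trajectory `(X(t))_{t ≥ 0}` of `USD_p` with `n` agents started
from the configuration `x0`: it is a probability measure on paths whose finite-dimensional
cylinder probabilities are the products of the one-step transition probabilities. -/
def IsUSD (n : ℕ) (p : ℝ) (x0 : ℕ × ℕ × ℕ) (μ : Measure (ℕ → ℕ × ℕ × ℕ)) : Prop :=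
  IsProbabilityMeasure μ ∧
  ∀ (t : ℕ) (seq : ℕ → ℕ × ℕ × ℕ),
    (μ {ω | ∀ i ≤ t, ω i = seq i}).toReal =
      (if seq 0 = x0 then (1 : ℝ) else 0) *
        ∏ i ∈ Finset.range t, usdStep n p (seq i) (seq (i + 1))

/-- The weighted bias `Δ_w = x₁ - (1 - p)·x₂` of a configuration. -/
noncomputable def dw (p : ℝ) (c : ℕ × ℕ × ℕ) : ℝ := (c.1 : ℝ) - (1 - p) * (c.2.1 : ℝ)

/-!
Let `h_t(c)` be the probability that the chain started from `c` has `x₁ = n` at some time `≤ t`.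
First-step analysis gives `h_{t+1}(c) = 1` if `c₁ = n` and `h_{t+1}(c) = P_p h_t(c)` otherwise,
where `P_p f = f + L_p f / n²` is the one-step expectation operator and `L_p` the generator.
Order configurations by `c ≤ c'` iff `c₁ ≤ c'₁` and `c'₂ ≤ c₂`. Induction on `t` shows that `h_t`
is order-preserving and nondecreasing in `p`, since:

* `P_p` maps order-preserving functions to order-preserving ones. It suffices to check the two
  elementary moves `u → 1` and `2 → u`; for each, `n² (P_p f(c') - P_p f(c))` is an explicit
  nonnegative combination of increments of `f` along ordered pairs of states (a monotone coupling
  of the two one-step laws).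
* For order-preserving `f` and `p̃ ≤ p`, `P_p̃ f ≤ P_p f`: raising `p` only moves mass from the
  transition `x₁ → x₁ - 1` to staying put.

Finally `μ {∃ s ≤ t, X₁(s) = n} = h_t(x)`, by summing the cylinder probabilities of the paths
that hit `{x₁ = n}`.
-/

open scoped ENNReal

namespace USD

section PathSums

variable {S : Type*}

def pathWeight {M : Type*} [CommMonoid M] (K : S → S → M) {t : ℕ} (v : Fin (t + 1) → S) : M :=
  ∏ i : Fin t, K (v i.castSucc) (v i.succ)

theorem pathWeight_cons {M : Type*} [CommMonoid M] (K : S → S → M) {t : ℕ} (s : S)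
    (v : Fin (t + 1) → S) :
    pathWeight K (Fin.cons s v : Fin (t + 2) → S) = K s (v 0) * pathWeight K v := by
  simp [pathWeight, Fin.prod_univ_succ]

theorem tsum_fin_cons {t : ℕ} (F : (Fin (t + 1) → S) → ℝ≥0∞) :
    ∑' v, F v = ∑' s, ∑' v : Fin t → S, F (Fin.cons s v) := by
  rw [← (Fin.consEquiv fun _ => S).tsum_eq, ENNReal.tsum_prod']
  rfl

variable (K : S → S → ℝ≥0∞)

theorem tsum_pathWeight_cons {V : Set S} (hK : ∀ c ∈ V, ∑' d, K c d = 1)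
    (hV : ∀ c ∈ V, ∀ d, K c d ≠ 0 → d ∈ V) (t : ℕ) {c : S} (hc : c ∈ V) :
    ∑' v : Fin t → S, pathWeight K (Fin.cons c v : Fin (t + 1) → S) = 1 := by
  induction t generalizing c with
  | zero => simp [pathWeight]
  | succ t ih =>
    calc ∑' v : Fin (t + 1) → S, pathWeight K (Fin.cons c v : Fin (t + 2) → S)
        = ∑' d, K c d * ∑' v : Fin t → S, pathWeight K (Fin.cons d v : Fin (t + 1) → S) := by
          simp_rw [pathWeight_cons, tsum_fin_cons, ← ENNReal.tsum_mul_left, Fin.cons_zero]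
      _ = ∑' d, K c d := by
          refine tsum_congr fun d => ?_
          by_cases hd : K c d = 0
          · simp [hd]
          · rw [ih (hV c hc d hd), mul_one]
      _ = 1 := hK c hc

noncomputable def hitMass (A : Set S) (t : ℕ) (c : S) : ℝ≥0∞ :=
  ∑' v : Fin t → S,
    {w : Fin (t + 1) → S | ∃ i, w i ∈ A}.indicator (pathWeight K) (Fin.cons c v)

theorem hitMass_zero (A : Set S) (c : S) : hitMass K A 0 c = A.indicator 1 c := by
  rw [hitMass, (hasSum_unique _).tsum_eq]
  by_cases hc : c ∈ A <;> simp [Set.indicator, pathWeight, Fin.exists_fin_one, hc]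

theorem hitMass_succ_of_mem {V : Set S} (hK : ∀ c ∈ V, ∑' d, K c d = 1)
    (hV : ∀ c ∈ V, ∀ d, K c d ≠ 0 → d ∈ V) {A : Set S} (t : ℕ) {c : S} (hc : c ∈ V)
    (hcA : c ∈ A) : hitMass K A (t + 1) c = 1 := by
  have : ∀ v : Fin (t + 1) → S, ∃ i, (Fin.cons c v : Fin (t + 2) → S) i ∈ A := fun _ => ⟨0, hcA⟩
  simpa [hitMass, Set.indicator, this] using tsum_pathWeight_cons K hK hV (t + 1) hc

theorem hitMass_succ_of_notMem {A : Set S} (t : ℕ) {c : S} (hcA : c ∉ A) :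
    hitMass K A (t + 1) c = ∑' d, K c d * hitMass K A t d := by
  have hhit (w : Fin (t + 1) → S) :
      (Fin.cons c w : Fin (t + 1 + 1) → S) ∈ {w | ∃ i, w i ∈ A} ↔ w ∈ {w | ∃ i, w i ∈ A} := by
    simp [Fin.exists_fin_succ, hcA]
  rw [hitMass, tsum_fin_cons]
  refine tsum_congr fun d => ?_
  rw [hitMass, ← ENNReal.tsum_mul_left]
  refine tsum_congr fun v => ?_
  by_cases h : (Fin.cons d v : Fin (t + 1) → S) ∈ {w | ∃ i, w i ∈ A}
  · rw [Set.indicator_of_mem h, Set.indicator_of_mem ((hhit _).2 h), pathWeight_cons,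
      Fin.cons_zero]
  · rw [Set.indicator_of_notMem h, Set.indicator_of_notMem (mt (hhit _).1 h), mul_zero]

end PathSums

theorem mul_nonneg_of_ne_zero {r x : ℝ} (hr : 0 ≤ r) (hx : r ≠ 0 → 0 ≤ x) : 0 ≤ r * x := by
  rcases eq_or_ne r 0 with h | h
  · simp [h]
  · exact mul_nonneg hr (hx h)

theorem natCast_mul_sub_nonneg {m : ℕ} {x y : ℝ} (h : 0 < m → x ≤ y) : 0 ≤ (m : ℝ) * (y - x) :=
  mul_nonneg_of_ne_zero m.cast_nonneg fun hm =>
    sub_nonneg.2 (h (Nat.pos_of_ne_zero (by exact_mod_cast hm)))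

variable {n : ℕ} {p : ℝ}

def IsConfig (n : ℕ) (c : ℕ × ℕ × ℕ) : Prop := c.1 + c.2.1 + c.2.2 = n

def MonotoneOnConfigs (n : ℕ) (f : ℕ × ℕ × ℕ → ℝ) : Prop :=
  ∀ ⦃a b u a' b' u' : ℕ⦄, a + b + u = n → a' + b' + u' = n → a ≤ a' → b' ≤ b →
    f (a, b, u) ≤ f (a', b', u')

/-- `n²` times the probabilities of the four moves of `usdStep`, listed in the same order. -/
def jumpRate (p : ℝ) (c : ℕ × ℕ × ℕ) : Fin 4 → ℝ :=
  ![(1 - p) * c.1 * c.2.1, c.1 * c.2.1, c.2.2 * c.1, c.2.2 * c.2.1]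

def jumpTarget (c : ℕ × ℕ × ℕ) : Fin 4 → ℕ × ℕ × ℕ :=
  ![(c.1 - 1, c.2.1, c.2.2 + 1), (c.1, c.2.1 - 1, c.2.2 + 1),
    (c.1 + 1, c.2.1, c.2.2 - 1), (c.1, c.2.1 + 1, c.2.2 - 1)]

noncomputable def stayProb (n : ℕ) (p : ℝ) (c : ℕ × ℕ × ℕ) : ℝ :=
  1 - (∑ k, jumpRate p c k) / (n : ℝ) ^ 2

def generator (p : ℝ) (f : ℕ × ℕ × ℕ → ℝ) (c : ℕ × ℕ × ℕ) : ℝ :=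
  ∑ k, jumpRate p c k * (f (jumpTarget c k) - f c)

noncomputable def transOp (n : ℕ) (p : ℝ) (f : ℕ × ℕ × ℕ → ℝ) (c : ℕ × ℕ × ℕ) : ℝ :=
  f c + generator p f c / (n : ℝ) ^ 2

theorem usdStep_eq (n : ℕ) (p : ℝ) (c d : ℕ × ℕ × ℕ) :
    usdStep n p c d =
      ∑ k, (if d = jumpTarget c k then jumpRate p c k / (n : ℝ) ^ 2 else 0) +
        if d = c then stayProb n p c else 0 := by
  simp only [usdStep, stayProb, jumpRate, jumpTarget, Fin.sum_univ_four, Matrix.cons_val_zero,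
    Matrix.cons_val_one, Matrix.cons_val]
  ring_nf

theorem transOp_eq_sum (n : ℕ) (p : ℝ) (f : ℕ × ℕ × ℕ → ℝ) (c : ℕ × ℕ × ℕ) :
    transOp n p f c =
      ∑ k, jumpRate p c k / (n : ℝ) ^ 2 * f (jumpTarget c k) + stayProb n p c * f c := by
  simp only [transOp, generator, stayProb, Fin.sum_univ_four]
  ring

theorem transOp_const (n : ℕ) (p r : ℝ) (c : ℕ × ℕ × ℕ) : transOp n p (fun _ => r) c = r := by
  simp [transOp, generator]

theorem jumpRate_nonneg (hp1 : p ≤ 1) (c : ℕ × ℕ × ℕ) (k : Fin 4) : 0 ≤ jumpRate p c k := by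
  have : 0 ≤ 1 - p := by linarith
  fin_cases k <;> simp [jumpRate] <;> positivity

theorem isConfig_jumpTarget {c : ℕ × ℕ × ℕ} (hc : IsConfig n c) {k : Fin 4}
    (hk : jumpRate p c k ≠ 0) : IsConfig n (jumpTarget c k) := by
  obtain ⟨a, b, u⟩ := c
  unfold IsConfig at *
  fin_cases k <;> simp [jumpRate, jumpTarget] at * <;> omega

theorem stayProb_nonneg (hn : n ≠ 0) (hp0 : 0 ≤ p) {c : ℕ × ℕ × ℕ} (hc : IsConfig n c) :
    0 ≤ stayProb n p c := by
  obtain ⟨a, b, u⟩ := c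
  have hN : (n : ℝ) = a + b + u := by exact_mod_cast hc.symm
  have ha : (0 : ℝ) ≤ a := a.cast_nonneg
  have hb : (0 : ℝ) ≤ b := b.cast_nonneg
  have hu : (0 : ℝ) ≤ u := u.cast_nonneg
  rw [stayProb, sub_nonneg, div_le_one (by positivity), hN]
  simp only [jumpRate, Fin.sum_univ_four, Matrix.cons_val_zero, Matrix.cons_val_one,
    Matrix.cons_val]
  linear_combination sq_nonneg (a : ℝ) + sq_nonneg (b : ℝ) + sq_nonneg (u : ℝ) +
    mul_nonneg hp0 (mul_nonneg ha hb) + mul_nonneg hu ha + mul_nonneg hu hb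

theorem usdStep_nonneg (hn : n ≠ 0) (hp0 : 0 ≤ p) (hp1 : p ≤ 1) {c : ℕ × ℕ × ℕ}
    (hc : IsConfig n c) (d : ℕ × ℕ × ℕ) : 0 ≤ usdStep n p c d := by
  rw [usdStep_eq]
  refine add_nonneg (Finset.sum_nonneg fun k _ => ?_) ?_ <;> split_ifs
  exacts [div_nonneg (jumpRate_nonneg hp1 c k) (by positivity), le_rfl,
    stayProb_nonneg hn hp0 hc, le_rfl]

theorem transOp_mono (hn : n ≠ 0) (hp0 : 0 ≤ p) (hp1 : p ≤ 1) {f g : ℕ × ℕ × ℕ → ℝ}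
    (hfg : ∀ c, IsConfig n c → f c ≤ g c) {c : ℕ × ℕ × ℕ} (hc : IsConfig n c) :
    transOp n p f c ≤ transOp n p g c := by
  rw [← sub_nonneg, transOp_eq_sum, transOp_eq_sum]
  have hjump k : 0 ≤ jumpRate p c k / (n : ℝ) ^ 2 * (g (jumpTarget c k) - f (jumpTarget c k)) :=
    mul_nonneg_of_ne_zero (div_nonneg (jumpRate_nonneg hp1 c k) (by positivity)) fun hk =>
      sub_nonneg.2 (hfg _ (isConfig_jumpTarget hc (left_ne_zero_of_mul hk)))
  have hstay := mul_nonneg (stayProb_nonneg hn hp0 hc) (sub_nonneg.2 (hfg c hc))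
  have hsum := Finset.sum_nonneg fun k (_ : k ∈ Finset.univ) => hjump k
  simp only [mul_sub, Finset.sum_sub_distrib] at hstay hsum
  linarith

theorem transOp_le_transOp_of_generator (hn : n ≠ 0) {f : ℕ × ℕ × ℕ → ℝ} {c c' : ℕ × ℕ × ℕ}
    (h : generator p f c - generator p f c' ≤ (n : ℝ) ^ 2 * (f c' - f c)) :
    transOp n p f c ≤ transOp n p f c' := by
  have hn2 : (0 : ℝ) < (n : ℝ) ^ 2 := by positivity
  have : transOp n p f c' - transOp n p f c =
      ((n : ℝ) ^ 2 * (f c' - f c) - (generator p f c - generator p f c')) / (n : ℝ) ^ 2 := by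
    unfold transOp
    field_simp
    ring
  rw [← sub_nonneg, this]
  exact div_nonneg (by linarith) hn2.le

/- In this lemma and the next, each fact `Fᵢ`/`Gᵢ` pairs a move of the lower state with a move of
the upper state that keeps the pair ordered; the coefficients of the `linear_combination` are the
masses of this coupling, and the coefficient of `hΔ` collects the remaining mass, on which both
states stay put or jump to each other. -/
theorem transOp_mono_undecided_to_one {f : ℕ × ℕ × ℕ → ℝ} (hf : MonotoneOnConfigs n f)
    (hp0 : 0 ≤ p) (hp1 : p ≤ 1) {a b u : ℕ} (h : a + b + u + 1 = n) :
    transOp n p f (a, b, u + 1) ≤ transOp n p f (a + 1, b, u) := by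
  apply transOp_le_transOp_of_generator (by omega)
  have hΔ : 0 ≤ f (a + 1, b, u) - f (a, b, u + 1) :=
    sub_nonneg.2 (hf (by omega) (by omega) (by omega) (by omega))
  have F1 : 0 ≤ (a : ℝ) * (f (a, b, u + 1) - f (a - 1, b, u + 1 + 1)) :=
    natCast_mul_sub_nonneg fun _ => hf (by omega) (by omega) (by omega) (by omega)
  have F2 : 0 ≤ f (a, b, u + 1) - f (a, b + 1, u) :=
    sub_nonneg.2 (hf (by omega) (by omega) (by omega) (by omega))
  have F3 : 0 ≤ f (a + 1, b, u) - f (a, b + 1, u) :=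
    sub_nonneg.2 (hf (by omega) (by omega) (by omega) (by omega))
  have F4 : 0 ≤ (b : ℝ) * (f (a + 1, b - 1, u + 1) - f (a, b - 1, u + 1 + 1)) :=
    natCast_mul_sub_nonneg fun _ => hf (by omega) (by omega) (by omega) (by omega)
  have F5 : 0 ≤ (b : ℝ) * (f (a + 1, b - 1, u + 1) - f (a, b, u + 1)) :=
    natCast_mul_sub_nonneg fun _ => hf (by omega) (by omega) (by omega) (by omega)
  have F6 : 0 ≤ (u : ℝ) * (f (a + 1 + 1, b, u - 1) - f (a + 1, b, u)) :=
    natCast_mul_sub_nonneg fun _ => hf (by omega) (by omega) (by omega) (by omega)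
  have F7 : 0 ≤ (u : ℝ) * (f (a + 1 + 1, b, u - 1) - f (a, b, u + 1)) :=
    natCast_mul_sub_nonneg fun _ => hf (by omega) (by omega) (by omega) (by omega)
  have F8 : 0 ≤ (u : ℝ) * (f (a + 1, b + 1, u - 1) - f (a, b + 1, u)) :=
    natCast_mul_sub_nonneg fun _ => hf (by omega) (by omega) (by omega) (by omega)
  subst h
  simp only [generator, Fin.sum_univ_four, jumpRate, jumpTarget, Matrix.cons_val_zero,
    Matrix.cons_val_one, Matrix.cons_val, Nat.cast_add, Nat.cast_one, add_tsub_cancel_right]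
  linear_combination (1 - p) * (b : ℝ) * F1 + (1 - p) * (b : ℝ) * F2 + p * (b : ℝ) * F3 +
    (a : ℝ) * F4 + F5 + (a : ℝ) * F6 + F7 + (b : ℝ) * F8 +
    (p * a * b + a ^ 2 + b ^ 2 + u ^ 2 + 1 + a * u + b * u + a + u : ℝ) * hΔ

theorem transOp_mono_two_to_undecided {f : ℕ × ℕ × ℕ → ℝ} (hf : MonotoneOnConfigs n f)
    (hp0 : 0 ≤ p) (hp1 : p ≤ 1) {a b u : ℕ} (h : a + b + u + 1 = n) :
    transOp n p f (a, b + 1, u) ≤ transOp n p f (a, b, u + 1) := by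
  apply transOp_le_transOp_of_generator (by omega)
  have hΔ : 0 ≤ f (a, b, u + 1) - f (a, b + 1, u) :=
    sub_nonneg.2 (hf (by omega) (by omega) (by omega) (by omega))
  have G1 : 0 ≤ (a : ℝ) * (f (a - 1, b, u + 1 + 1) - f (a - 1, b + 1, u + 1)) :=
    natCast_mul_sub_nonneg fun _ => hf (by omega) (by omega) (by omega) (by omega)
  have G2 : 0 ≤ (a : ℝ) * (f (a, b, u + 1) - f (a - 1, b + 1, u + 1)) :=
    natCast_mul_sub_nonneg fun _ => hf (by omega) (by omega) (by omega) (by omega)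
  have G3 : 0 ≤ (b : ℝ) * (f (a, b - 1, u + 1 + 1) - f (a, b, u + 1)) :=
    natCast_mul_sub_nonneg fun _ => hf (by omega) (by omega) (by omega) (by omega)
  have G4 : 0 ≤ f (a + 1, b, u) - f (a, b, u + 1) :=
    sub_nonneg.2 (hf (by omega) (by omega) (by omega) (by omega))
  have G5 : 0 ≤ (u : ℝ) * (f (a + 1, b, u) - f (a + 1, b + 1, u - 1)) :=
    natCast_mul_sub_nonneg fun _ => hf (by omega) (by omega) (by omega) (by omega)
  have G6 : 0 ≤ (u : ℝ) * (f (a, b + 1, u) - f (a, b + 1 + 1, u - 1)) :=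
    natCast_mul_sub_nonneg fun _ => hf (by omega) (by omega) (by omega) (by omega)
  have G7 : 0 ≤ (u : ℝ) * (f (a, b, u + 1) - f (a, b + 1 + 1, u - 1)) :=
    natCast_mul_sub_nonneg fun _ => hf (by omega) (by omega) (by omega) (by omega)
  subst h
  simp only [generator, Fin.sum_univ_four, jumpRate, jumpTarget, Matrix.cons_val_zero,
    Matrix.cons_val_one, Matrix.cons_val, Nat.cast_add, Nat.cast_one, add_tsub_cancel_right]
  linear_combination (1 - p) * (b : ℝ) * G1 + (1 - p) * G2 + (a : ℝ) * G3 + (a : ℝ) * G4 +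
    (a : ℝ) * G5 + (b : ℝ) * G6 + G7 +
    (p * a * b + p * a + a ^ 2 + b ^ 2 + u ^ 2 + 1 + a * u + b * u + b + u : ℝ) * hΔ

theorem transOp_le_transOp_of_le {pt : ℝ} (hpt : pt ≤ p) {f : ℕ × ℕ × ℕ → ℝ}
    (hf : MonotoneOnConfigs n f) {c : ℕ × ℕ × ℕ} (hc : IsConfig n c) :
    transOp n pt f c ≤ transOp n p f c := by
  obtain ⟨a, b, u⟩ := c
  have hc : a + b + u = n := hc
  have F : 0 ≤ (a : ℝ) * (f (a, b, u) - f (a - 1, b, u + 1)) :=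
    natCast_mul_sub_nonneg fun _ => hf (by omega) hc (by omega) le_rfl
  have : generator pt f (a, b, u) ≤ generator p f (a, b, u) := by
    simp only [generator, Fin.sum_univ_four, jumpRate, jumpTarget, Matrix.cons_val_zero,
      Matrix.cons_val_one, Matrix.cons_val]
    linear_combination (p - pt) * (b : ℝ) * F
  unfold transOp
  gcongr

theorem monotoneOnConfigs_of_steps {f : ℕ × ℕ × ℕ → ℝ}
    (h₁ : ∀ a b u, a + b + u + 1 = n → f (a, b, u + 1) ≤ f (a + 1, b, u))
    (h₂ : ∀ a b u, a + b + u + 1 = n → f (a, b + 1, u) ≤ f (a, b, u + 1)) :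
    MonotoneOnConfigs n f := by
  intro a b u a' b' u' h h' ha hb
  obtain ⟨k, hk⟩ : ∃ k, a' - a + (b - b') = k := ⟨_, rfl⟩
  induction k generalizing a b u with
  | zero =>
    obtain ⟨rfl, rfl, rfl⟩ : a = a' ∧ b = b' ∧ u = u' := by omega
    exact le_rfl
  | succ k ih =>
    by_cases hb' : b' < b
    · obtain ⟨b, rfl⟩ : ∃ m, b = m + 1 := ⟨b - 1, by omega⟩
      exact (h₂ a b u (by omega)).trans (ih (by omega) ha (by omega) (by omega))
    · obtain ⟨u, rfl⟩ : ∃ m, u = m + 1 := ⟨u - 1, by omega⟩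
      exact (h₁ a b u (by omega)).trans (ih (by omega) (by omega) hb (by omega))

noncomputable def hitProb (n : ℕ) (p : ℝ) : ℕ → ℕ × ℕ × ℕ → ℝ
  | 0, c => if c.1 = n then 1 else 0
  | t + 1, c => if c.1 = n then 1 else transOp n p (hitProb n p t) c

theorem hitProb_mem_Icc (hn : n ≠ 0) (hp0 : 0 ≤ p) (hp1 : p ≤ 1) (t : ℕ) {c : ℕ × ℕ × ℕ}
    (hc : IsConfig n c) : hitProb n p t c ∈ Set.Icc 0 1 := by
  induction t generalizing c with
  | zero => unfold hitProb; split_ifs <;> simp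
  | succ t ih =>
    unfold hitProb
    split_ifs
    · simp
    · constructor
      · simpa [transOp_const] using
          transOp_mono hn hp0 hp1 (f := fun _ => 0) (fun d hd => (ih hd).1) hc
      · simpa [transOp_const] using
          transOp_mono hn hp0 hp1 (g := fun _ => 1) (fun d hd => (ih hd).2) hc

theorem monotoneOnConfigs_hitProb (hn : n ≠ 0) (hp0 : 0 ≤ p) (hp1 : p ≤ 1) (t : ℕ) :
    MonotoneOnConfigs n (hitProb n p t) := by
  induction t with
  | zero =>
    intro a b u a' b' u' h h' ha hb
    simp only [hitProb]
    split_ifs <;> first | omega | norm_num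
  | succ t ih =>
    apply monotoneOnConfigs_of_steps
    · intro a b u h
      simp only [hitProb]
      by_cases ha : a + 1 = n
      · rw [if_pos ha]
        exact (hitProb_mem_Icc hn hp0 hp1 (t + 1) (c := (a, b, u + 1)) (by unfold IsConfig; omega)).2
      · rw [if_neg (by omega), if_neg ha]
        exact transOp_mono_undecided_to_one ih hp0 hp1 h
    · intro a b u h
      simp only [hitProb]
      rw [if_neg (by omega), if_neg (by omega)]
      exact transOp_mono_two_to_undecided ih hp0 hp1 h

theorem hitProb_mono_param (hn : n ≠ 0) {pt : ℝ} (hpt0 : 0 ≤ pt) (hpt : pt ≤ p) (hp1 : p ≤ 1)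
    (t : ℕ) {c : ℕ × ℕ × ℕ} (hc : IsConfig n c) : hitProb n pt t c ≤ hitProb n p t c := by
  induction t generalizing c with
  | zero => rfl
  | succ t ih =>
    simp only [hitProb]
    split_ifs
    · rfl
    · exact (transOp_mono hn hpt0 (hpt.trans hp1) (fun d hd => ih hd) hc).trans
        (transOp_le_transOp_of_le hpt (monotoneOnConfigs_hitProb hn (hpt0.trans hpt) hp1 t) hc)

noncomputable def usdKernel (n : ℕ) (p : ℝ) (c d : ℕ × ℕ × ℕ) : ℝ≥0∞ :=
  ENNReal.ofReal (usdStep n p c d)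

theorem isConfig_of_usdKernel_ne_zero {c d : ℕ × ℕ × ℕ} (hc : IsConfig n c)
    (h : usdKernel n p c d ≠ 0) : IsConfig n d := by
  contrapose! h
  have hjump : ∀ k, (if d = jumpTarget c k then jumpRate p c k / (n : ℝ) ^ 2 else 0) = 0 := by
    intro k
    split_ifs with hk
    · by_contra hr
      exact h (hk ▸ isConfig_jumpTarget hc fun h0 => hr (by rw [h0, zero_div]))
    · rfl
  rw [usdKernel, usdStep_eq, if_neg (by rintro rfl; exact h hc)]
  simp [hjump]

theorem tsum_usdKernel_mul (hn : n ≠ 0) (hp0 : 0 ≤ p) (hp1 : p ≤ 1) {c : ℕ × ℕ × ℕ}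
    (hc : IsConfig n c) (G : ℕ × ℕ × ℕ → ℝ≥0∞) :
    ∑' d, usdKernel n p c d * G d =
      ∑ k, ENNReal.ofReal (jumpRate p c k / (n : ℝ) ^ 2) * G (jumpTarget c k) +
        ENNReal.ofReal (stayProb n p c) * G c := by
  have hrate k : 0 ≤ jumpRate p c k / (n : ℝ) ^ 2 :=
    div_nonneg (jumpRate_nonneg hp1 c k) (by positivity)
  have hterm d : usdKernel n p c d * G d =
      ∑ k, (if d = jumpTarget c k then
          ENNReal.ofReal (jumpRate p c k / (n : ℝ) ^ 2) * G (jumpTarget c k) else 0) +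
        if d = c then ENNReal.ofReal (stayProb n p c) * G c else 0 := by
    rw [usdKernel, usdStep_eq, ENNReal.ofReal_add
      (Finset.sum_nonneg fun k _ => by split_ifs <;> simp [hrate])
      (by split_ifs <;> simp [stayProb_nonneg hn hp0 hc]), ENNReal.ofReal_sum_of_nonneg
      (fun k _ => by split_ifs <;> simp [hrate]), add_mul, Finset.sum_mul]
    congr 1
    · refine Finset.sum_congr rfl fun k _ => ?_
      split_ifs with h <;> simp [h]
    · split_ifs with h <;> simp [h]
  rw [tsum_congr hterm, ENNReal.tsum_add, Summable.tsum_finsetSum fun _ _ => ENNReal.summable]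
  simp only [tsum_ite_eq]

theorem tsum_usdKernel_mul_ofReal (hn : n ≠ 0) (hp0 : 0 ≤ p) (hp1 : p ≤ 1) {c : ℕ × ℕ × ℕ}
    (hc : IsConfig n c) {f : ℕ × ℕ × ℕ → ℝ} (hf : ∀ d, IsConfig n d → 0 ≤ f d) :
    ∑' d, usdKernel n p c d * ENNReal.ofReal (f d) = ENNReal.ofReal (transOp n p f c) := by
  have hrate k : 0 ≤ jumpRate p c k / (n : ℝ) ^ 2 :=
    div_nonneg (jumpRate_nonneg hp1 c k) (by positivity)
  have hjump k : 0 ≤ jumpRate p c k / (n : ℝ) ^ 2 * f (jumpTarget c k) :=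
    mul_nonneg_of_ne_zero (hrate k) fun h =>
      hf _ (isConfig_jumpTarget hc fun h0 => h (by rw [h0, zero_div]))
  have hstay := stayProb_nonneg hn hp0 hc
  rw [tsum_usdKernel_mul hn hp0 hp1 hc, transOp_eq_sum, ENNReal.ofReal_add
    (Finset.sum_nonneg fun k _ => hjump k) (mul_nonneg hstay (hf c hc)),
    ENNReal.ofReal_sum_of_nonneg fun k _ => hjump k, ENNReal.ofReal_mul hstay]
  simp only [ENNReal.ofReal_mul (hrate _)]

theorem tsum_usdKernel (hn : n ≠ 0) (hp0 : 0 ≤ p) (hp1 : p ≤ 1) {c : ℕ × ℕ × ℕ}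
    (hc : IsConfig n c) : ∑' d, usdKernel n p c d = 1 := by
  simpa [transOp_const] using
    tsum_usdKernel_mul_ofReal hn hp0 hp1 hc (f := fun _ => 1) fun _ _ => zero_le_one

theorem hitMass_usdKernel (hn : n ≠ 0) (hp0 : 0 ≤ p) (hp1 : p ≤ 1) (t : ℕ) {c : ℕ × ℕ × ℕ}
    (hc : IsConfig n c) :
    hitMass (usdKernel n p) {d | d.1 = n} t c = ENNReal.ofReal (hitProb n p t c) := by
  induction t generalizing c with
  | zero =>
    rw [hitMass_zero, hitProb]
    by_cases hcn : c.1 = n <;> simp [hcn]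
  | succ t ih =>
    by_cases hcn : c.1 = n
    · rw [hitMass_succ_of_mem _ (V := {d | IsConfig n d}) (fun d hd => tsum_usdKernel hn hp0 hp1 hd)
        (fun d hd e he => isConfig_of_usdKernel_ne_zero hd he) t hc hcn, hitProb, if_pos hcn,
        ENNReal.ofReal_one]
    · rw [hitMass_succ_of_notMem _ (A := {d : ℕ × ℕ × ℕ | d.1 = n}) t hcn, hitProb, if_neg hcn,
        ← tsum_usdKernel_mul_ofReal hn hp0 hp1 hc fun d hd => (hitProb_mem_Icc hn hp0 hp1 t hd).1]
      refine tsum_congr fun d => ?_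
      by_cases hd : usdKernel n p c d = 0
      · simp [hd]
      · rw [ih (isConfig_of_usdKernel_ne_zero hc hd)]

/- `usdStep` can be negative off the simplex, so `ofReal` does not commute with products of
steps in general; along a path that starts on the simplex, the first step leaving it has
weight `0`. -/
theorem ofReal_pathWeight_usdStep (hn : n ≠ 0) (hp0 : 0 ≤ p) (hp1 : p ≤ 1) {t : ℕ}
    {c : ℕ × ℕ × ℕ} (hc : IsConfig n c) (v : Fin t → ℕ × ℕ × ℕ) :
    ENNReal.ofReal (pathWeight (usdStep n p) (Fin.cons c v : Fin (t + 1) → ℕ × ℕ × ℕ)) =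
      pathWeight (usdKernel n p) (Fin.cons c v : Fin (t + 1) → ℕ × ℕ × ℕ) := by
  induction t generalizing c with
  | zero => simp [pathWeight]
  | succ t ih =>
    obtain ⟨d, w, rfl⟩ : ∃ d w, v = Fin.cons d w := ⟨v 0, Fin.tail v, (Fin.cons_self_tail v).symm⟩
    rw [pathWeight_cons, pathWeight_cons, Fin.cons_zero]
    by_cases hd : usdKernel n p c d = 0
    · have : usdStep n p c d = 0 :=
        le_antisymm (ENNReal.ofReal_eq_zero.1 hd) (usdStep_nonneg hn hp0 hp1 hc d)
      simp [this, hd]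
    · rw [ENNReal.ofReal_mul (usdStep_nonneg hn hp0 hp1 hc d),
        ih (isConfig_of_usdKernel_ne_zero hc hd)]
      rfl

theorem _root_.IsUSD.measure_cylinder {x0 : ℕ × ℕ × ℕ} {μ : Measure (ℕ → ℕ × ℕ × ℕ)}
    (hμ : IsUSD n p x0 μ) (hn : n ≠ 0) (hp0 : 0 ≤ p) (hp1 : p ≤ 1) (hx0 : IsConfig n x0) {t : ℕ}
    (v : Fin (t + 1) → ℕ × ℕ × ℕ) :
    μ {ω | ∀ i : Fin (t + 1), ω i = v i} = if v 0 = x0 then pathWeight (usdKernel n p) v else 0 := by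
  have := hμ.1
  set seq : ℕ → ℕ × ℕ × ℕ := fun i => if h : i ≤ t then v ⟨i, by omega⟩ else x0
  have hcyl : {ω : ℕ → ℕ × ℕ × ℕ | ∀ i : Fin (t + 1), ω i = v i} = {ω | ∀ i ≤ t, ω i = seq i} := by
    ext ω
    simp only [Set.mem_ofPred_eq, Fin.forall_iff, Nat.lt_add_one_iff, seq]
    exact forall₂_congr fun i hi => by rw [dif_pos hi]
  have hprod : ∏ i ∈ Finset.range t, usdStep n p (seq i) (seq (i + 1)) =
      pathWeight (usdStep n p) v := by
    rw [pathWeight, ← Fin.prod_univ_eq_prod_range]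
    simp [seq]
    rfl
  rw [hcyl, ← ENNReal.ofReal_toReal (measure_ne_top μ _), hμ.2 t seq, hprod, show seq 0 = v 0 by simp [seq]]
  split_ifs with hv
  · rw [one_mul, ← Fin.cons_self_tail v, ofReal_pathWeight_usdStep hn hp0 hp1 (hv ▸ hx0)]
  · simp

theorem _root_.IsUSD.measure_hitting {x0 : ℕ × ℕ × ℕ} {μ : Measure (ℕ → ℕ × ℕ × ℕ)}
    (hμ : IsUSD n p x0 μ) (hn : n ≠ 0) (hp0 : 0 ≤ p) (hp1 : p ≤ 1) (hx0 : IsConfig n x0) (t : ℕ) :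
    μ {ω | ∃ s ≤ t, (ω s).1 = n} = hitMass (usdKernel n p) {c | c.1 = n} t x0 := by
  set r : (ℕ → ℕ × ℕ × ℕ) → (Fin (t + 1) → ℕ × ℕ × ℕ) := fun ω i => ω i
  set E : Set (Fin (t + 1) → ℕ × ℕ × ℕ) := {v | ∃ i, v i ∈ {c : ℕ × ℕ × ℕ | c.1 = n}}
  have hr : Measurable r := measurable_pi_lambda _ fun i => measurable_pi_apply _
  have hE : {ω : ℕ → ℕ × ℕ × ℕ | ∃ s ≤ t, (ω s).1 = n} = r ⁻¹' E := by
    ext ω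
    simp [r, E, Fin.exists_iff]
  have hpoint (v : Fin (t + 1) → ℕ × ℕ × ℕ) :
      μ.map r {v} = if v 0 = x0 then pathWeight (usdKernel n p) v else 0 := by
    rw [Measure.map_apply hr (measurableSet_singleton v), ← hμ.measure_cylinder hn hp0 hp1 hx0]
    congr 1
    ext ω
    simp [r, funext_iff]
  rw [hE, ← Measure.map_apply hr (Set.to_countable E).measurableSet,
    ← Measure.tsum_indicator_apply_singleton _ _ (Set.to_countable E).measurableSet, tsum_fin_cons,
    tsum_eq_single x0]
  · refine tsum_congr fun v => ?_
    by_cases hv : (Fin.cons x0 v : Fin (t + 1) → ℕ × ℕ × ℕ) ∈ E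
    · rw [Set.indicator_of_mem hv, Set.indicator_of_mem hv, hpoint, Fin.cons_zero, if_pos rfl]
    · rw [Set.indicator_of_notMem hv, Set.indicator_of_notMem hv]
  · intro s hs
    refine ENNReal.tsum_eq_zero.2 fun v => Set.indicator_apply_eq_zero.2 fun _ => ?_
    rw [hpoint, Fin.cons_zero, if_neg hs]

end USD

/-- If `p̃ ≤ p`, `x̃₁ ≤ x₁` and `x̃₂ ≥ x₂`, then for every `t ≥ 0` the
probability that `USD_p` started from `x` has reached `X₁ = n` by time `t` is at least the
corresponding probability for `USD_p̃` started from `x̃`. -/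
theorem stmt_3 (n : ℕ) (hn : 2 ≤ n) (p pt : ℝ)
    (hp : p ∈ Set.Icc (0 : ℝ) 1) (hpt : pt ∈ Set.Icc (0 : ℝ) 1) (hple : pt ≤ p)
    (x xt : ℕ × ℕ × ℕ)
    (hx : x.1 + x.2.1 + x.2.2 = n) (hxt : xt.1 + xt.2.1 + xt.2.2 = n)
    (h1 : xt.1 ≤ x.1) (h2 : x.2.1 ≤ xt.2.1)
    (μ μt : Measure (ℕ → ℕ × ℕ × ℕ))
    (hμ : IsUSD n p x μ) (hμt : IsUSD n pt xt μt) (t : ℕ) :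
    μt {ω | ∃ s ≤ t, (ω s).1 = n} ≤ μ {ω | ∃ s ≤ t, (ω s).1 = n} := by
  have hn0 : n ≠ 0 := by omega
  rw [hμ.measure_hitting hn0 hp.1 hp.2 hx, hμt.measure_hitting hn0 hpt.1 hpt.2 hxt,
    USD.hitMass_usdKernel hn0 hp.1 hp.2 t hx, USD.hitMass_usdKernel hn0 hpt.1 hpt.2 t hxt]
  refine ENNReal.ofReal_le_ofReal ((USD.hitProb_mono_param hn0 hpt.1 hple hp.2 t hxt).trans ?_)
  obtain ⟨a, b, u⟩ := x
  obtain ⟨a', b', u'⟩ := xt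
  exact USD.monotoneOnConfigs_hitProb hn0 hp.1 hp.2 t hxt hx h1 h2
end

section
/- Let p, p̃ ∈ [0,1] and let x = (x₁,x₂,u) and x̃ = (x̃₁,x̃₂,ũ) be configurations with p̃ ≥ p, x̃₁ ≥ x₁ and x̃₂ ≤ x₂. Then for all t ≥ 0, Pr[T₂(p,x) ≤ t] ≥ Pr[T₂(p̃,x̃) ≤ t], where T₂(p,x) denotes the first time s ≥ 0 at which X₂(s) = n for the chain USD_p started from x. -/
/-!
Both hitting probabilities obey the first-step recursion `h₀(c) = [c₂ = n]`,
`h_{t+1}(c) = 1` if `c₂ = n` and `∑_d P(c, d) h_t(d)` otherwise, which can be read off the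
cylinder probabilities of the path measure.

One step of `USD_p` from `(x₁, x₂, u)` is realized by listing the agents as `x₁` holders of
Opinion 1, then `u` undecided agents, then `x₂` holders of Opinion 2, drawing an ordered pair
`(i, j)` of agents uniformly (agent `i` observes agent `j`) and flipping a coin that lets an
Opinion-1 agent yield to Opinion 2 with probability `1 - p`. Feeding the same pair and a
monotonely coupled coin to both chains preserves `x₁ ≤ x̃₁` and `x̃₂ ≤ x₂`, so by induction on `t`
the hitting probability of `X₂ = n` from `(p̃, x̃)` never exceeds the one from `(p, x)`.
-/

open MeasureTheory

open Finset

section MarkovChain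

variable {α : Type*}

def pathCylinder (k : ℕ) (s : ℕ → α) : Set (ℕ → α) := {ω | ∀ i ≤ k, ω i = s i}

def hitProb (P : α → α → ℝ) (S : Finset α) (G : α → Prop) [DecidablePred G] : ℕ → α → ℝ
  | 0, c => if G c then 1 else 0
  | t + 1, c => if G c then 1 else ∑ d ∈ S, P c d * hitProb P S G t d

lemma pathCylinder_succ_update [DecidableEq α] (k : ℕ) (s : ℕ → α) (d : α) :
    pathCylinder (k + 1) (Function.update s (k + 1) d) =
      pathCylinder k s ∩ {ω | ω (k + 1) = d} := by
  ext ω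
  simp only [pathCylinder, Set.mem_inter_iff, Set.mem_ofPred_eq]
  constructor
  · intro h
    refine ⟨fun i hi => ?_, by simpa using h (k + 1) le_rfl⟩
    simpa [Function.update_of_ne (show i ≠ k + 1 by omega)] using h i (by omega)
  · rintro ⟨h, hd⟩ i hi
    rcases Nat.lt_or_eq_of_le hi with hi | rfl
    · rw [Function.update_of_ne (by omega)]
      exact h i (by omega)
    · simpa using hd

variable {G : α → Prop}

lemma pathCylinder_inter_exists_of_start {k : ℕ} {s : ℕ → α} (hG : G (s k)) (m : ℕ) :
    pathCylinder k s ∩ {ω | ∃ r ≤ m, G (ω (k + r))} = pathCylinder k s :=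
  Set.inter_eq_left.2 fun ω hω => ⟨0, m.zero_le, by rwa [add_zero, hω k le_rfl]⟩

lemma pathCylinder_inter_exists_of_not_start {k : ℕ} {s : ℕ → α} (hG : ¬ G (s k)) (m : ℕ) :
    pathCylinder k s ∩ {ω | ∃ r ≤ m + 1, G (ω (k + r))} =
      pathCylinder k s ∩ {ω | ∃ r ≤ m, G (ω (k + 1 + r))} := by
  ext ω
  simp only [Set.mem_inter_iff, Set.mem_ofPred_eq, and_congr_right_iff]
  intro hω
  constructor
  · rintro ⟨_ | r, hr, h⟩
    · exact absurd (hω k le_rfl ▸ h) hG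
    · exact ⟨r, by omega, by rwa [show k + 1 + r = k + (r + 1) by omega]⟩
  · rintro ⟨r, hr, h⟩
    exact ⟨r + 1, by omega, by rwa [show k + (r + 1) = k + 1 + r by omega]⟩

variable [MeasurableSpace α]

def IsMarkovChainLaw [DecidableEq α] (P : α → α → ℝ) (x₀ : α) (μ : Measure (ℕ → α)) : Prop :=
  IsProbabilityMeasure μ ∧
  ∀ (t : ℕ) (s : ℕ → α),
    μ.real (pathCylinder t s) = (if s 0 = x₀ then 1 else 0) * ∏ i ∈ range t, P (s i) (s (i + 1))

lemma IsMarkovChainLaw.measureReal_pathCylinder_succ [DecidableEq α] {P : α → α → ℝ} {x₀ : α}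
    {μ : Measure (ℕ → α)} (hμ : IsMarkovChainLaw P x₀ μ) (k : ℕ) (s : ℕ → α) (d : α) :
    μ.real (pathCylinder (k + 1) (Function.update s (k + 1) d)) =
      μ.real (pathCylinder k s) * P (s k) d := by
  have hs : ∀ i ≤ k, Function.update s (k + 1) d i = s i := fun i hi =>
    Function.update_of_ne (by omega) _ _
  rw [hμ.2, hμ.2, prod_range_succ, Function.update_self, hs 0 k.zero_le, hs k le_rfl,
    prod_congr rfl fun i hi => by rw [hs i (by simp at hi; omega), hs (i + 1) (by simp at hi; omega)]]
  ring

variable [MeasurableSingletonClass α]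

lemma measurableSet_pathCylinder (k : ℕ) (s : ℕ → α) : MeasurableSet (pathCylinder k s) := by
  have : pathCylinder k s = ⋂ i ∈ Set.Iic k, (fun ω => ω i) ⁻¹' {s i} := by
    ext ω; simp [pathCylinder]
  rw [this]
  exact MeasurableSet.biInter (Set.to_countable _) fun i _ =>
    measurable_pi_apply i (measurableSet_singleton (s i))

variable [Countable α]

lemma measurableSet_exists_le (G : α → Prop) (k m : ℕ) :
    MeasurableSet {ω : ℕ → α | ∃ r ≤ m, G (ω (k + r))} := by
  have : {ω : ℕ → α | ∃ r ≤ m, G (ω (k + r))} =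
      ⋃ r ∈ Set.Iic m, (fun ω => ω (k + r)) ⁻¹' {a | G a} := by
    ext ω; simp
  rw [this]
  exact MeasurableSet.biUnion (Set.to_countable _) fun r _ =>
    measurable_pi_apply (k + r) (Set.to_countable _).measurableSet

lemma measureReal_eq_sum_inter_preimage {Ω : Type*} [MeasurableSpace Ω] {μ : Measure Ω}
    [IsFiniteMeasure μ] {f : Ω → α} (hf : Measurable f) {B : Set Ω} (hB : MeasurableSet B)
    (S : Finset α) (hS : ∀ a ∉ S, μ (B ∩ f ⁻¹' {a}) = 0) :
    μ.real B = ∑ a ∈ S, μ.real (B ∩ f ⁻¹' {a}) := by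
  have hdisj : Pairwise (Function.onFun Disjoint fun a => B ∩ f ⁻¹' {a}) := fun a b hab =>
    Set.disjoint_left.2 fun ω ha hb => hab (ha.2.symm.trans hb.2)
  have hunion : B = ⋃ a, B ∩ f ⁻¹' {a} := by
    ext ω; simp
  conv_lhs => rw [hunion]
  rw [Measure.real, measure_iUnion hdisj fun a => hB.inter (hf (measurableSet_singleton a)),
    tsum_eq_sum hS, ENNReal.toReal_sum fun a _ => measure_ne_top μ _]
  rfl

variable [DecidableEq α] [DecidablePred G] {P : α → α → ℝ} {x₀ : α} {μ : Measure (ℕ → α)}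
  {S : Finset α}

lemma IsMarkovChainLaw.measureReal_pathCylinder_inter_exists (hμ : IsMarkovChainLaw P x₀ μ)
    (hS : ∀ c ∈ S, ∀ d ∉ S, P c d = 0) (m : ℕ) :
    ∀ k (s : ℕ → α), s k ∈ S →
      μ.real (pathCylinder k s ∩ {ω | ∃ r ≤ m, G (ω (k + r))}) =
        μ.real (pathCylinder k s) * hitProb P S G m (s k) := by
  have := hμ.1
  induction m with
  | zero =>
    intro k s _
    by_cases hG : G (s k)
    · rw [pathCylinder_inter_exists_of_start hG]
      simp [hitProb, hG]
    · have : pathCylinder k s ∩ {ω | ∃ r ≤ 0, G (ω (k + r))} = ∅ := by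
        ext ω
        simp only [nonpos_iff_eq_zero, exists_eq_left, add_zero, Set.mem_inter_iff,
          Set.mem_ofPred_eq, Set.mem_empty_iff_false, iff_false, not_and]
        exact fun hω => hω k le_rfl ▸ hG
      rw [this]
      simp [hitProb, hG]
  | succ m ih =>
    intro k s hsk
    by_cases hG : G (s k)
    · rw [pathCylinder_inter_exists_of_start hG]
      simp [hitProb, hG]
    set B := pathCylinder k s ∩ {ω | ∃ r ≤ m, G (ω (k + 1 + r))}
    have hfiber (d : α) : B ∩ (fun ω => ω (k + 1)) ⁻¹' {d} =
        pathCylinder (k + 1) (Function.update s (k + 1) d) ∩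
          {ω | ∃ r ≤ m, G (ω (k + 1 + r))} := by
      rw [pathCylinder_succ_update, Set.inter_right_comm]; rfl
    have hnull (d : α) (hd : d ∉ S) : μ (B ∩ (fun ω => ω (k + 1)) ⁻¹' {d}) = 0 := by
      rw [hfiber]
      refine measure_mono_null Set.inter_subset_left ?_
      rw [← measureReal_eq_zero_iff, hμ.measureReal_pathCylinder_succ, hS _ hsk d hd, mul_zero]
    rw [pathCylinder_inter_exists_of_not_start hG, measureReal_eq_sum_inter_preimage
      (measurable_pi_apply (k + 1)) ((measurableSet_pathCylinder k s).inter
        (measurableSet_exists_le G (k + 1) m)) S hnull]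
    simp only [hitProb, hG, if_false, mul_sum]
    refine sum_congr rfl fun d hd => ?_
    rw [hfiber, ih _ _ (by simpa using hd), hμ.measureReal_pathCylinder_succ, Function.update_self]
    ring

theorem IsMarkovChainLaw.measureReal_exists_eq_hitProb (hμ : IsMarkovChainLaw P x₀ μ)
    (hS : ∀ c ∈ S, ∀ d ∉ S, P c d = 0) (hx₀ : x₀ ∈ S) (m : ℕ) :
    μ.real {ω | ∃ r ≤ m, G (ω r)} = hitProb P S G m x₀ := by
  have := hμ.1
  have hstart : μ.real (pathCylinder 0 fun _ => x₀) = 1 := by simp [hμ.2]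
  have h := hμ.measureReal_pathCylinder_inter_exists (G := G) hS m 0 (fun _ => x₀) hx₀
  simp only [zero_add, hstart, one_mul] at h
  rw [← h, Set.inter_comm, Measure.real, Measure.real, measure_inter_conull]
  rw [prob_compl_eq_zero_iff (measurableSet_pathCylinder 0 _), ← ENNReal.toReal_eq_one_iff]
  exact hstart

end MarkovChain

section USD

def configs (n : ℕ) : Finset (ℕ × ℕ × ℕ) :=
  (range (n + 1) ×ˢ range (n + 1) ×ˢ range (n + 1)).filter fun c => c.1 + c.2.1 + c.2.2 = n

variable {n : ℕ} {c : ℕ × ℕ × ℕ}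

lemma mem_configs : c ∈ configs n ↔ c.1 + c.2.1 + c.2.2 = n := by
  obtain ⟨a, b, u⟩ := c
  simp only [configs, mem_filter, mem_product, mem_range]
  omega

lemma sum_ite_eq_mul {β : Type*} [DecidableEq β] {S : Finset β} {e : β} {r : ℝ}
    (h : e ∈ S ∨ r = 0) (H : β → ℝ) :
    ∑ d ∈ S, (if d = e then r else 0) * H d = r * H e := by
  simp only [ite_mul, zero_mul, sum_ite_eq']
  rcases h with h | rfl
  · simp [h]
  · simp

lemma ite_eq_zero_of_notMem {β : Type*} [DecidableEq β] {S : Finset β} {d e : β} {r : ℝ}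
    (h : e ∈ S ∨ r = 0) (hd : d ∉ S) : (if d = e then r else 0) = 0 := by
  rcases h with h | rfl
  · exact if_neg (ne_of_mem_of_not_mem h hd).symm
  · exact ite_self 0

lemma usdStep_targets_mem_or_rate_eq_zero (hc : c ∈ configs n) (p : ℝ) :
    ((c.1 - 1, c.2.1, c.2.2 + 1) ∈ configs n ∨ (1 - p) * c.1 * c.2.1 / (n : ℝ) ^ 2 = 0) ∧
    ((c.1, c.2.1 - 1, c.2.2 + 1) ∈ configs n ∨ (c.1 : ℝ) * c.2.1 / (n : ℝ) ^ 2 = 0) ∧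
    ((c.1 + 1, c.2.1, c.2.2 - 1) ∈ configs n ∨ (c.2.2 : ℝ) * c.1 / (n : ℝ) ^ 2 = 0) ∧
    ((c.1, c.2.1 + 1, c.2.2 - 1) ∈ configs n ∨ (c.2.2 : ℝ) * c.2.1 / (n : ℝ) ^ 2 = 0) := by
  obtain ⟨a, b, u⟩ := c
  simp only [mem_configs] at hc ⊢
  rcases Nat.eq_zero_or_pos a with rfl | ha <;> rcases Nat.eq_zero_or_pos b with rfl | hb <;>
    rcases Nat.eq_zero_or_pos u with rfl | hu <;> refine ⟨?_, ?_, ?_, ?_⟩ <;>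
    first | (left; omega) | (right; simp)

lemma usdStep_eq_zero_of_notMem {d : ℕ × ℕ × ℕ} (hc : c ∈ configs n) (hd : d ∉ configs n)
    (p : ℝ) : usdStep n p c d = 0 := by
  obtain ⟨h₁, h₂, h₃, h₄⟩ := usdStep_targets_mem_or_rate_eq_zero hc p
  rw [usdStep, ite_eq_zero_of_notMem h₁ hd, ite_eq_zero_of_notMem h₂ hd,
    ite_eq_zero_of_notMem h₃ hd, ite_eq_zero_of_notMem h₄ hd,
    if_neg (ne_of_mem_of_not_mem hc hd).symm]
  norm_num

inductive AgentState
  | one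
  | undecided
  | two

def agentState (c : ℕ × ℕ × ℕ) (i : ℕ) : AgentState :=
  if i < c.1 then .one else if i < c.1 + c.2.2 then .undecided else .two

lemma sum_range_agentState (hc : c ∈ configs n) (f : AgentState → ℝ) :
    ∑ i ∈ range n, f (agentState c i) = c.1 * f .one + c.2.2 * f .undecided + c.2.1 * f .two := by
  obtain ⟨a, b, u⟩ := c
  rw [mem_configs] at hc
  subst hc
  have h₁ : ∀ i ∈ range a, agentState (a, b, u) i = .one := fun i hi => by
    simp only [mem_range] at hi; simp [agentState, hi]
  have h₂ : ∀ i ∈ range u, agentState (a, b, u) (a + i) = .undecided := fun i hi => by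
    simp only [mem_range] at hi; simp [agentState, hi]
  have h₃ : ∀ i ∈ range b, agentState (a, b, u) (a + u + i) = .two := fun i hi => by
    simp only [agentState]; split_ifs <;> first | rfl | omega
  rw [show a + b + u = a + u + b by ring, sum_range_add, sum_range_add,
    sum_congr rfl fun i hi => congrArg f (h₁ i hi), sum_congr rfl fun i hi => congrArg f (h₂ i hi),
    sum_congr rfl fun i hi => congrArg f (h₃ i hi)]
  simp

-- `interact c r o y`: an agent in state `r` observes one in state `o`; an Opinion-1 agent meeting
-- Opinion 2 becomes undecided only if the coin `y` is `true`.
def interact (c : ℕ × ℕ × ℕ) : AgentState → AgentState → Bool → ℕ × ℕ × ℕ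
  | .one, .two, true => (c.1 - 1, c.2.1, c.2.2 + 1)
  | .two, .one, _ => (c.1, c.2.1 - 1, c.2.2 + 1)
  | .undecided, .one, _ => (c.1 + 1, c.2.1, c.2.2 - 1)
  | .undecided, .two, _ => (c.1, c.2.1 + 1, c.2.2 - 1)
  | _, _, _ => c

def coupledStep (c : ℕ × ℕ × ℕ) (i j : ℕ) (yields : Bool) : ℕ × ℕ × ℕ :=
  interact c (agentState c i) (agentState c j) yields

noncomputable def coupledMean (n : ℕ) (p : ℝ) (c : ℕ × ℕ × ℕ) (H : ℕ × ℕ × ℕ → ℝ) : ℝ :=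
  (∑ i ∈ range n, ∑ j ∈ range n,
    (p * H (coupledStep c i j false) + (1 - p) * H (coupledStep c i j true))) / (n : ℝ) ^ 2

lemma sum_usdStep_mul_eq_coupledMean (hn : 0 < n) (hc : c ∈ configs n) (p : ℝ)
    (H : ℕ × ℕ × ℕ → ℝ) :
    ∑ d ∈ configs n, usdStep n p c d * H d = coupledMean n p c H := by
  obtain ⟨h₁, h₂, h₃, h₄⟩ := usdStep_targets_mem_or_rate_eq_zero hc p
  simp only [usdStep, add_mul, sum_add_distrib]
  rw [sum_ite_eq_mul h₁, sum_ite_eq_mul h₂, sum_ite_eq_mul h₃, sum_ite_eq_mul h₄,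
    sum_ite_eq_mul (Or.inl hc), coupledMean]
  set F : AgentState → AgentState → ℝ :=
    fun s s' => p * H (interact c s s' false) + (1 - p) * H (interact c s s' true) with hF
  change _ = (∑ i ∈ range n, ∑ j ∈ range n, F (agentState c i) (agentState c j)) / _
  rw [sum_congr rfl fun i _ => sum_range_agentState hc (F (agentState c i)),
    sum_range_agentState hc fun s => c.1 * F s .one + c.2.2 * F s .undecided + c.2.1 * F s .two]
  obtain ⟨a, b, u⟩ := c
  have hn' : (a : ℝ) + b + u = n := by exact_mod_cast (mem_configs.1 hc)
  simp only [hF, interact]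
  rw [← hn']
  have : (a : ℝ) + b + u ≠ 0 := by rw [hn']; positivity
  field_simp
  ring

lemma coupledStep_mem (hc : c ∈ configs n) {i : ℕ} (hi : i < n) (j : ℕ) (y : Bool) :
    coupledStep c i j y ∈ configs n := by
  obtain ⟨a, b, u⟩ := c
  rw [mem_configs] at hc ⊢
  unfold coupledStep agentState
  dsimp only at hc ⊢
  split_ifs <;> cases y <;> simp only [interact] <;> omega

lemma coupledStep_mono {ct : ℕ × ℕ × ℕ} (hc : c ∈ configs n) (hct : ct ∈ configs n)
    (h₁ : c.1 ≤ ct.1) (h₂ : ct.2.1 ≤ c.2.1) (i j : ℕ) {y yt : Bool} (hy : yt ≤ y) :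
    (coupledStep c i j y).1 ≤ (coupledStep ct i j yt).1 ∧
      (coupledStep ct i j yt).2.1 ≤ (coupledStep c i j y).2.1 := by
  obtain ⟨a, b, u⟩ := c
  obtain ⟨a', b', u'⟩ := ct
  rw [mem_configs] at hc hct
  unfold coupledStep agentState
  dsimp only at hc hct h₁ h₂ ⊢
  revert hy
  cases y <;> cases yt <;> intro hy <;> split_ifs <;> simp only [interact] <;>
    first | omega | exact absurd hy (by decide)

lemma coupledMean_le_coupledMean {p pt : ℝ} {ct : ℕ × ℕ × ℕ} {H Ht : ℕ × ℕ × ℕ → ℝ}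
    (hp : 0 ≤ p) (hpt : pt ≤ 1) (hle : p ≤ pt) (hc : c ∈ configs n) (hct : ct ∈ configs n)
    (h₁ : c.1 ≤ ct.1) (h₂ : ct.2.1 ≤ c.2.1)
    (hH : ∀ d ∈ configs n, ∀ dt ∈ configs n, d.1 ≤ dt.1 → dt.2.1 ≤ d.2.1 → Ht dt ≤ H d) :
    coupledMean n pt ct Ht ≤ coupledMean n p c H := by
  refine div_le_div_of_nonneg_right (sum_le_sum fun i hi => sum_le_sum fun j _ => ?_)
    (by positivity)
  have key {y yt : Bool} (hy : yt ≤ y) : Ht (coupledStep ct i j yt) ≤ H (coupledStep c i j y) :=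
    hH _ (coupledStep_mem hc (mem_range.1 hi) j y) _ (coupledStep_mem hct (mem_range.1 hi) j yt)
      (coupledStep_mono hc hct h₁ h₂ i j hy).1 (coupledStep_mono hc hct h₁ h₂ i j hy).2
  -- split the weights as `pt = p + (pt - p)` on the `ct` side and `1 - p = (pt - p) + (1 - pt)`
  -- on the `c` side, and compare the three pieces with coins `(false, false)`, `(true, false)`,
  -- `(true, true)`
  linarith [mul_le_mul_of_nonneg_left (key (le_refl false)) hp,
    mul_le_mul_of_nonneg_left (key (Bool.false_le true)) (sub_nonneg.2 hle),
    mul_le_mul_of_nonneg_left (key (le_refl true)) (sub_nonneg.2 hpt)]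

lemma coupledMean_le_one {p : ℝ} {H : ℕ × ℕ × ℕ → ℝ} (hp₀ : 0 ≤ p) (hp₁ : p ≤ 1)
    (hc : c ∈ configs n) (hH : ∀ d ∈ configs n, H d ≤ 1) : coupledMean n p c H ≤ 1 := by
  refine div_le_one_of_le₀ ?_ (by positivity)
  calc ∑ i ∈ range n, ∑ j ∈ range n,
        (p * H (coupledStep c i j false) + (1 - p) * H (coupledStep c i j true))
      ≤ ∑ i ∈ range n, ∑ j ∈ range n, (1 : ℝ) := by
        gcongr with i hi j
        have hi := mem_range.1 hi
        nlinarith [hH _ (coupledStep_mem hc hi j false), hH _ (coupledStep_mem hc hi j true)]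
    _ = (n : ℝ) ^ 2 := by simp [sq]

noncomputable def usdHitProb (n : ℕ) (p : ℝ) : ℕ → ℕ × ℕ × ℕ → ℝ :=
  hitProb (usdStep n p) (configs n) (fun c => c.2.1 = n)

lemma usdHitProb_succ (hn : 0 < n) (hc : c ∈ configs n) (h : c.2.1 ≠ n) (p : ℝ) (t : ℕ) :
    usdHitProb n p (t + 1) c = coupledMean n p c (usdHitProb n p t) := by
  rw [usdHitProb, hitProb, if_neg h, sum_usdStep_mul_eq_coupledMean hn hc]

lemma usdHitProb_le_one (hn : 0 < n) {p : ℝ} (hp₀ : 0 ≤ p) (hp₁ : p ≤ 1) (t : ℕ) :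
    ∀ c ∈ configs n, usdHitProb n p t c ≤ 1 := by
  induction t with
  | zero =>
    intro c _
    simp only [usdHitProb, hitProb]
    split_ifs <;> norm_num
  | succ t ih =>
    intro c hc
    by_cases h : c.2.1 = n
    · simp [usdHitProb, hitProb, h]
    · rw [usdHitProb_succ hn hc h]
      exact coupledMean_le_one hp₀ hp₁ hc ih

lemma usdHitProb_le_usdHitProb (hn : 0 < n) {p pt : ℝ} (hp : 0 ≤ p) (hpt : pt ≤ 1)
    (hle : p ≤ pt) (t : ℕ) :
    ∀ c ∈ configs n, ∀ ct ∈ configs n, c.1 ≤ ct.1 → ct.2.1 ≤ c.2.1 →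
      usdHitProb n pt t ct ≤ usdHitProb n p t c := by
  induction t with
  | zero =>
    intro c hc ct hct h₁ h₂
    have := mem_configs.1 hc
    simp only [usdHitProb, hitProb]
    split_ifs <;> norm_num
    omega
  | succ t ih =>
    intro c hc ct hct h₁ h₂
    by_cases hG : c.2.1 = n
    · rw [show usdHitProb n p (t + 1) c = 1 by simp [usdHitProb, hitProb, hG]]
      exact usdHitProb_le_one hn (hp.trans hle) hpt _ ct hct
    have hGt : ct.2.1 ≠ n := by have := mem_configs.1 hc; omega
    rw [usdHitProb_succ hn hc hG, usdHitProb_succ hn hct hGt]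
    exact coupledMean_le_coupledMean hp hpt hle hc hct h₁ h₂ ih

end USD

/-- If `p̃ ≥ p`, `x̃₁ ≥ x₁` and `x̃₂ ≤ x₂`, then for every `t ≥ 0` the
probability that `USD_p` started from `x` has reached `X₂ = n` by time `t` is at least the
corresponding probability for `USD_p̃` started from `x̃`. -/
theorem stmt_4 (n : ℕ) (hn : 2 ≤ n) (p pt : ℝ)
    (hp : p ∈ Set.Icc (0 : ℝ) 1) (hpt : pt ∈ Set.Icc (0 : ℝ) 1) (hple : p ≤ pt)
    (x xt : ℕ × ℕ × ℕ)
    (hx : x.1 + x.2.1 + x.2.2 = n) (hxt : xt.1 + xt.2.1 + xt.2.2 = n)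
    (h1 : x.1 ≤ xt.1) (h2 : xt.2.1 ≤ x.2.1)
    (μ μt : Measure (ℕ → ℕ × ℕ × ℕ))
    (hμ : IsUSD n p x μ) (hμt : IsUSD n pt xt μt) (t : ℕ) :
    μt {ω | ∃ s ≤ t, (ω s).2.1 = n} ≤ μ {ω | ∃ s ≤ t, (ω s).2.1 = n} := by
  have := hμ.1
  have := hμt.1
  have hit (q : ℝ) (y : ℕ × ℕ × ℕ) (ν : Measure (ℕ → ℕ × ℕ × ℕ)) (hν : IsUSD n q y ν)
      (hy : y ∈ configs n) : ν.real {ω | ∃ s ≤ t, (ω s).2.1 = n} = usdHitProb n q t y :=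
    -- `IsUSD n q y ν` is `IsMarkovChainLaw (usdStep n q) y ν` unfolded
    IsMarkovChainLaw.measureReal_exists_eq_hitProb (G := fun c => c.2.1 = n) hν
      (fun _ hc _ hd => usdStep_eq_zero_of_notMem hc hd q) hy t
  have key : μt.real {ω | ∃ s ≤ t, (ω s).2.1 = n} ≤ μ.real {ω | ∃ s ≤ t, (ω s).2.1 = n} := by
    rw [hit pt xt μt hμt (mem_configs.2 hxt), hit p x μ hμ (mem_configs.2 hx)]
    exact usdHitProb_le_usdHitProb (by omega) hp.1 hpt.2 hple t x (mem_configs.2 hx) xt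
      (mem_configs.2 hxt) h1 h2
  exact (ENNReal.toReal_le_toReal (measure_ne_top _ _) (measure_ne_top _ _)).1 key
end

section
/- Let p, p̃ ∈ [0,1] with p ≥ p̃ and let x = (x₁,x₂,u) and x̃ = (x̃₁,x̃₂,ũ) be configurations with x ⪰_C x̃, i.e. x₁ ≥ x̃₁ and x₁ + u ≥ x̃₁ + ũ. Then there exists a coupling of one step of USD_p from x with one step of USD_{p̃} from x̃ — that is, a probability measure on pairs of configurations whose first marginal is the one-step distribution of USD_p from x and whose second marginal is the one-step distribution of USD_{p̃} from x̃ — under which almost surely the first component is ⪰_C the second component. -/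
open MeasureTheory

/-- The one-step distribution of `USD_p` with `n` agents from configuration `c`, as a
measure on configurations. -/
noncomputable def usdStepMeasure (n : ℕ) (p : ℝ) (c : ℕ × ℕ × ℕ) :
    Measure (ℕ × ℕ × ℕ) :=
  Measure.sum fun d => ENNReal.ofReal (usdStep n p c d) • Measure.dirac d

/-- The order `⪰_C` on configurations: `a ⪰_C b` iff `a₁ ≥ b₁` and `a₁ + a_u ≥ b₁ + b_u`. -/
def succeqC (a b : ℕ × ℕ × ℕ) : Prop := b.1 ≤ a.1 ∧ b.1 + b.2.2 ≤ a.1 + a.2.2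


open scoped ENNReal

namespace Stmt6Aux
open scoped ENNReal

lemma smul_dirac_singleton {α : Type*} [MeasurableSpace α] [MeasurableSingletonClass α] [DecidableEq α]
    (w : ℝ≥0∞) (e d : α) :
    (w • Measure.dirac e) {d} = if e = d then w else 0 := by
  rw [Measure.smul_apply, Measure.dirac_apply' _ (measurableSet_singleton d)]
  by_cases h : e = d
  · simp [h]
  · simp [Set.indicator_apply, h]

lemma usdStepMeasure_singleton (n : ℕ) (p : ℝ) (c d : ℕ × ℕ × ℕ) :
    usdStepMeasure n p c {d} = ENNReal.ofReal (usdStep n p c d) := by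
  rw [usdStepMeasure, Measure.sum_apply _ (measurableSet_singleton d)]
  rw [tsum_eq_single d]
  · rw [smul_dirac_singleton, if_pos rfl]
  · intro e he
    rw [smul_dirac_singleton, if_neg he]

lemma ofReal_ite (P : Prop) [Decidable P] (w : ℝ) :
    ENNReal.ofReal (if P then w else 0) = if P then ENNReal.ofReal w else 0 := by
  split <;> simp

lemma ofReal_ite' {α : Type*} [DecidableEq α] (z d : α) (w : ℝ) :
    ENNReal.ofReal (if d = z then w else 0) = if z = d then ENNReal.ofReal w else 0 := by
  by_cases h : d = z
  · simp [h]
  · simp [h, Ne.symm h]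

lemma itenn {P : Prop} [Decidable P] {w : ℝ} (hw : 0 ≤ w) : 0 ≤ (if P then w else 0) := by
  split
  exacts [hw, le_rfl]

lemma ofReal_add5 {a b c d e : ℝ} (ha : 0 ≤ a) (hb : 0 ≤ b) (hc : 0 ≤ c) (hd : 0 ≤ d)
    (he : 0 ≤ e) :
    ENNReal.ofReal (a + b + c + d + e) =
      ENNReal.ofReal a + ENNReal.ofReal b + ENNReal.ofReal c + ENNReal.ofReal d +
        ENNReal.ofReal e := by
  rw [ENNReal.ofReal_add (by linarith) he, ENNReal.ofReal_add (by linarith) hd,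
      ENNReal.ofReal_add (by linarith) hc, ENNReal.ofReal_add ha hb]

lemma usd_decomp (n : ℕ) (p : ℝ) (c1 c2 c3 : ℕ) (hp1 : p ≤ 1)
    (hstay : 0 ≤ 1 - ((2 - p) * (c1 : ℝ) * (c2 : ℝ) + (c3 : ℝ) * ((c1 : ℝ) + (c2 : ℝ))) / (n : ℝ) ^ 2) :
    usdStepMeasure n p (c1, c2, c3) =
      ENNReal.ofReal ((1 - p) * (c1 : ℝ) * (c2 : ℝ) / (n : ℝ) ^ 2) • Measure.dirac (c1 - 1, c2, c3 + 1) +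
      ENNReal.ofReal ((c1 : ℝ) * (c2 : ℝ) / (n : ℝ) ^ 2) • Measure.dirac (c1, c2 - 1, c3 + 1) +
      ENNReal.ofReal ((c3 : ℝ) * (c1 : ℝ) / (n : ℝ) ^ 2) • Measure.dirac (c1 + 1, c2, c3 - 1) +
      ENNReal.ofReal ((c3 : ℝ) * (c2 : ℝ) / (n : ℝ) ^ 2) • Measure.dirac (c1, c2 + 1, c3 - 1) +
      ENNReal.ofReal
        (1 - ((2 - p) * (c1 : ℝ) * (c2 : ℝ) + (c3 : ℝ) * ((c1 : ℝ) + (c2 : ℝ))) / (n : ℝ) ^ 2) •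
        Measure.dirac (c1, c2, c3) := by
  apply Measure.ext_of_singleton
  intro d
  rw [Measure.add_apply, Measure.add_apply, Measure.add_apply, Measure.add_apply,
      smul_dirac_singleton, smul_dirac_singleton, smul_dirac_singleton, smul_dirac_singleton,
      smul_dirac_singleton, usdStepMeasure_singleton]
  have hN : (0:ℝ) ≤ (n:ℝ)^2 := by positivity
  have h1 : (0:ℝ) ≤ (1 - p) * (c1 : ℝ) * (c2 : ℝ) / (n : ℝ)^2 :=
    div_nonneg (mul_nonneg (mul_nonneg (by linarith) (Nat.cast_nonneg _)) (Nat.cast_nonneg _)) hN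
  have h2 : (0:ℝ) ≤ (c1 : ℝ) * (c2 : ℝ) / (n : ℝ)^2 := by positivity
  have h3 : (0:ℝ) ≤ (c3 : ℝ) * (c1 : ℝ) / (n : ℝ)^2 := by positivity
  have h4 : (0:ℝ) ≤ (c3 : ℝ) * (c2 : ℝ) / (n : ℝ)^2 := by positivity
  rw [show usdStep n p (c1, c2, c3) d =
    (if d = ((c1 : ℕ) - 1, c2, c3 + 1) then (1 - p) * (c1 : ℝ) * (c2 : ℝ) / (n : ℝ) ^ 2 else 0) +
    (if d = ((c1 : ℕ), c2 - 1, c3 + 1) then (c1 : ℝ) * (c2 : ℝ) / (n : ℝ) ^ 2 else 0) +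
    (if d = ((c1 : ℕ) + 1, c2, c3 - 1) then (c3 : ℝ) * (c1 : ℝ) / (n : ℝ) ^ 2 else 0) +
    (if d = ((c1 : ℕ), c2 + 1, c3 - 1) then (c3 : ℝ) * (c2 : ℝ) / (n : ℝ) ^ 2 else 0) +
    (if d = (c1, c2, c3) then
      1 - ((2 - p) * (c1 : ℝ) * (c2 : ℝ) + (c3 : ℝ) * ((c1 : ℝ) + (c2 : ℝ))) / (n : ℝ) ^ 2
    else 0) from rfl]
  rw [ofReal_add5 (itenn h1) (itenn h2) (itenn h3) (itenn h4) (itenn hstay)]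
  rw [ofReal_ite', ofReal_ite', ofReal_ite', ofReal_ite', ofReal_ite']

lemma succeqC_mk {a1 a2 a3 b1 b2 b3 : ℕ} (h1 : b1 ≤ a1) (h2 : b1 + b3 ≤ a1 + a3) :
    succeqC (a1, a2, a3) (b1, b2, b3) := ⟨h1, h2⟩

end Stmt6Aux

set_option maxHeartbeats 8000000 in
/-- Let `p ≥ p̃` and let `x ⪰_C x̃` be configurations.  Then there is a
coupling of one step of `USD_p` from `x` with one step of `USD_p̃` from `x̃` under which
almost surely the first component is `⪰_C` the second component. -/
theorem stmt_6 (n : ℕ) (hn : 2 ≤ n) (p pt : ℝ)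
    (hp : p ∈ Set.Icc (0 : ℝ) 1) (hpt : pt ∈ Set.Icc (0 : ℝ) 1) (hple : pt ≤ p)
    (x xt : ℕ × ℕ × ℕ)
    (hx : x.1 + x.2.1 + x.2.2 = n) (hxt : xt.1 + xt.2.1 + xt.2.2 = n)
    (hC : succeqC x xt) :
    ∃ ν : Measure ((ℕ × ℕ × ℕ) × (ℕ × ℕ × ℕ)),
      IsProbabilityMeasure ν ∧
      ν.map Prod.fst = usdStepMeasure n p x ∧
      ν.map Prod.snd = usdStepMeasure n pt xt ∧
      ∀ᵐ pr ∂ν, succeqC pr.1 pr.2 := by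
  classical
  obtain ⟨hp0, hp1⟩ := hp
  obtain ⟨hpt0, hpt1⟩ := hpt
  obtain ⟨x1, x2, u⟩ := x
  obtain ⟨y1, y2, v⟩ := xt
  obtain ⟨hC1, hC2⟩ := hC
  have hC1' : y1 ≤ x1 := hC1
  have hC2' : y1 + v ≤ x1 + u := hC2
  have hx' : x1 + x2 + u = n := hx
  have hxt' : y1 + y2 + v = n := hxt
  obtain ⟨m, hm1, hm2, hm3⟩ : ∃ m, m ≤ x1 ∧ m ≤ y1 + v ∧ (m = x1 ∨ m = y1 + v) :=
    ⟨min x1 (y1 + v), min_le_left _ _, min_le_right _ _, min_choice _ _⟩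
  obtain ⟨b, hb⟩ : ∃ b, b = m - y1 := ⟨_, rfl⟩
  obtain ⟨c, hc⟩ : ∃ c, c = x1 - m := ⟨_, rfl⟩
  obtain ⟨d, hd⟩ : ∃ d, d = y1 + v - m := ⟨_, rfl⟩
  obtain ⟨e, he⟩ : ∃ e, e = u - d := ⟨_, rfl⟩
  have hnR : (0:ℝ) < (n:ℝ) := by exact_mod_cast Nat.lt_of_lt_of_le (by norm_num) hn
  have hNpos : (0:ℝ) < (n:ℝ)^2 := by positivity
  have rabc : (y1:ℝ) + (b:ℝ) + (c:ℝ) = (x1:ℝ) := by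
    have h : y1 + b + c = x1 := by omega
    exact_mod_cast h
  have rde : (d:ℝ) + (e:ℝ) = (u:ℝ) := by
    have h : d + e = u := by omega
    exact_mod_cast h
  have rbd : (b:ℝ) + (d:ℝ) = (v:ℝ) := by
    have h : b + d = v := by omega
    exact_mod_cast h
  have rcef : (c:ℝ) + (e:ℝ) + (x2:ℝ) = (y2:ℝ) := by
    have h : c + e + x2 = y2 := by omega
    exact_mod_cast h
  have rn : (n:ℝ) = (y1:ℝ) + (b:ℝ) + (c:ℝ) + (x2:ℝ) + (d:ℝ) + (e:ℝ) := by
    have h : n = y1 + b + c + x2 + d + e := by omega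
    exact_mod_cast h
  have hden : (y1:ℝ) + (b:ℝ) + (c:ℝ) + (x2:ℝ) + (d:ℝ) + (e:ℝ) ≠ 0 := by
    rw [← rn]; exact ne_of_gt hnR
  have hxr : (x1:ℝ) + (x2:ℝ) + (u:ℝ) = (n:ℝ) := by exact_mod_cast hx'
  have hxtr : (y1:ℝ) + (y2:ℝ) + (v:ℝ) = (n:ℝ) := by exact_mod_cast hxt'
  have hstayX : 0 ≤ 1 - ((2 - p) * (x1:ℝ) * (x2:ℝ) + (u:ℝ) * ((x1:ℝ) + (x2:ℝ))) / (n:ℝ)^2 := by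
    rw [sub_nonneg, div_le_one hNpos, ← hxr]
    nlinarith [Nat.cast_nonneg (α := ℝ) x1, Nat.cast_nonneg (α := ℝ) x2, Nat.cast_nonneg (α := ℝ) u,
      mul_nonneg (Nat.cast_nonneg (α := ℝ) x1) (Nat.cast_nonneg (α := ℝ) x2),
      mul_nonneg (Nat.cast_nonneg (α := ℝ) x1) (Nat.cast_nonneg (α := ℝ) u),
      mul_nonneg (Nat.cast_nonneg (α := ℝ) x2) (Nat.cast_nonneg (α := ℝ) u),
      mul_nonneg hp0 (mul_nonneg (Nat.cast_nonneg (α := ℝ) x1) (Nat.cast_nonneg (α := ℝ) x2))]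
  have hstayY : 0 ≤ 1 - ((2 - pt) * (y1:ℝ) * (y2:ℝ) + (v:ℝ) * ((y1:ℝ) + (y2:ℝ))) / (n:ℝ)^2 := by
    rw [sub_nonneg, div_le_one hNpos, ← hxtr]
    nlinarith [Nat.cast_nonneg (α := ℝ) y1, Nat.cast_nonneg (α := ℝ) y2, Nat.cast_nonneg (α := ℝ) v,
      mul_nonneg (Nat.cast_nonneg (α := ℝ) y1) (Nat.cast_nonneg (α := ℝ) y2),
      mul_nonneg (Nat.cast_nonneg (α := ℝ) y1) (Nat.cast_nonneg (α := ℝ) v),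
      mul_nonneg (Nat.cast_nonneg (α := ℝ) y2) (Nat.cast_nonneg (α := ℝ) v),
      mul_nonneg hpt0 (mul_nonneg (Nat.cast_nonneg (α := ℝ) y1) (Nat.cast_nonneg (α := ℝ) y2))]
  obtain ⟨w1, hw1def⟩ : ∃ w : ℝ, w = (1-p)*(y1:ℝ)*(x2:ℝ)/(n:ℝ)^2 := ⟨_, rfl⟩
  obtain ⟨w2, hw2def⟩ : ∃ w : ℝ, w = ((1-pt)*(y1:ℝ)*(c:ℝ) + (1-pt)*(y1:ℝ)*(e:ℝ) + (p-pt)*(y1:ℝ)*(x2:ℝ))/(n:ℝ)^2 := ⟨_, rfl⟩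
  obtain ⟨w3, hw3def⟩ : ∃ w : ℝ, w = (1-p)*(b:ℝ)*(x2:ℝ)/(n:ℝ)^2 := ⟨_, rfl⟩
  obtain ⟨w4, hw4def⟩ : ∃ w : ℝ, w = (1-p)*(c:ℝ)*(x2:ℝ)/(n:ℝ)^2 := ⟨_, rfl⟩
  obtain ⟨w5, hw5def⟩ : ∃ w : ℝ, w = ((b:ℝ)*(c:ℝ) + (b:ℝ)*(e:ℝ) + p*(b:ℝ)*(x2:ℝ) + (d:ℝ)*(e:ℝ))/(n:ℝ)^2 := ⟨_, rfl⟩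
  obtain ⟨w6, hw6def⟩ : ∃ w : ℝ, w = (y1:ℝ)*(b:ℝ)/(n:ℝ)^2 := ⟨_, rfl⟩
  obtain ⟨w7, hw7def⟩ : ∃ w : ℝ, w = (y1:ℝ)*(c:ℝ)/(n:ℝ)^2 := ⟨_, rfl⟩
  obtain ⟨w8, hw8def⟩ : ∃ w : ℝ, w = ((y1:ℝ)*(y1:ℝ) + (y1:ℝ)*(b:ℝ) + (y1:ℝ)*(d:ℝ) + pt*(y1:ℝ)*(c:ℝ) + pt*(y1:ℝ)*(e:ℝ) + pt*(y1:ℝ)*(x2:ℝ) + (b:ℝ)*(b:ℝ) + (b:ℝ)*(d:ℝ) + (c:ℝ)*(b:ℝ) + (c:ℝ)*(c:ℝ) + (c:ℝ)*(d:ℝ) + (c:ℝ)*(e:ℝ) + p*(c:ℝ)*(x2:ℝ) + (d:ℝ)*(d:ℝ) + (e:ℝ)*(d:ℝ) + (e:ℝ)*(e:ℝ) + (x2:ℝ)*(d:ℝ) + (x2:ℝ)*(e:ℝ) + (x2:ℝ)*(x2:ℝ))/(n:ℝ)^2 := ⟨_, rfl⟩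
  obtain ⟨w9, hw9def⟩ : ∃ w : ℝ, w = (d:ℝ)*(y1:ℝ)/(n:ℝ)^2 := ⟨_, rfl⟩
  obtain ⟨w10, hw10def⟩ : ∃ w : ℝ, w = ((d:ℝ)*(b:ℝ) + (e:ℝ)*(b:ℝ) + (e:ℝ)*(c:ℝ))/(n:ℝ)^2 := ⟨_, rfl⟩
  obtain ⟨w11, hw11def⟩ : ∃ w : ℝ, w = (d:ℝ)*(c:ℝ)/(n:ℝ)^2 := ⟨_, rfl⟩
  obtain ⟨w12, hw12def⟩ : ∃ w : ℝ, w = (d:ℝ)*(x2:ℝ)/(n:ℝ)^2 := ⟨_, rfl⟩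
  obtain ⟨w13, hw13def⟩ : ∃ w : ℝ, w = (e:ℝ)*(y1:ℝ)/(n:ℝ)^2 := ⟨_, rfl⟩
  obtain ⟨w14, hw14def⟩ : ∃ w : ℝ, w = (e:ℝ)*(x2:ℝ)/(n:ℝ)^2 := ⟨_, rfl⟩
  obtain ⟨w15, hw15def⟩ : ∃ w : ℝ, w = (x2:ℝ)*(y1:ℝ)/(n:ℝ)^2 := ⟨_, rfl⟩
  obtain ⟨w16, hw16def⟩ : ∃ w : ℝ, w = ((x2:ℝ)*(b:ℝ) + (x2:ℝ)*(c:ℝ))/(n:ℝ)^2 := ⟨_, rfl⟩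
  have hw1 : 0 ≤ w1 := by
    rw [hw1def]
    refine div_nonneg ?_ (le_of_lt hNpos)
    repeat' apply add_nonneg
    all_goals
      first
        | exact mul_nonneg (Nat.cast_nonneg _) (Nat.cast_nonneg _)
        | exact mul_nonneg (mul_nonneg (by linarith) (Nat.cast_nonneg _)) (Nat.cast_nonneg _)
  have hw2 : 0 ≤ w2 := by
    rw [hw2def]
    refine div_nonneg ?_ (le_of_lt hNpos)
    repeat' apply add_nonneg
    all_goals
      first
        | exact mul_nonneg (Nat.cast_nonneg _) (Nat.cast_nonneg _)
        | exact mul_nonneg (mul_nonneg (by linarith) (Nat.cast_nonneg _)) (Nat.cast_nonneg _)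
  have hw3 : 0 ≤ w3 := by
    rw [hw3def]
    refine div_nonneg ?_ (le_of_lt hNpos)
    repeat' apply add_nonneg
    all_goals
      first
        | exact mul_nonneg (Nat.cast_nonneg _) (Nat.cast_nonneg _)
        | exact mul_nonneg (mul_nonneg (by linarith) (Nat.cast_nonneg _)) (Nat.cast_nonneg _)
  have hw4 : 0 ≤ w4 := by
    rw [hw4def]
    refine div_nonneg ?_ (le_of_lt hNpos)
    repeat' apply add_nonneg
    all_goals
      first
        | exact mul_nonneg (Nat.cast_nonneg _) (Nat.cast_nonneg _)
        | exact mul_nonneg (mul_nonneg (by linarith) (Nat.cast_nonneg _)) (Nat.cast_nonneg _)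
  have hw5 : 0 ≤ w5 := by
    rw [hw5def]
    refine div_nonneg ?_ (le_of_lt hNpos)
    repeat' apply add_nonneg
    all_goals
      first
        | exact mul_nonneg (Nat.cast_nonneg _) (Nat.cast_nonneg _)
        | exact mul_nonneg (mul_nonneg (by linarith) (Nat.cast_nonneg _)) (Nat.cast_nonneg _)
  have hw6 : 0 ≤ w6 := by
    rw [hw6def]
    refine div_nonneg ?_ (le_of_lt hNpos)
    repeat' apply add_nonneg
    all_goals
      first
        | exact mul_nonneg (Nat.cast_nonneg _) (Nat.cast_nonneg _)
        | exact mul_nonneg (mul_nonneg (by linarith) (Nat.cast_nonneg _)) (Nat.cast_nonneg _)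
  have hw7 : 0 ≤ w7 := by
    rw [hw7def]
    refine div_nonneg ?_ (le_of_lt hNpos)
    repeat' apply add_nonneg
    all_goals
      first
        | exact mul_nonneg (Nat.cast_nonneg _) (Nat.cast_nonneg _)
        | exact mul_nonneg (mul_nonneg (by linarith) (Nat.cast_nonneg _)) (Nat.cast_nonneg _)
  have hw8 : 0 ≤ w8 := by
    rw [hw8def]
    refine div_nonneg ?_ (le_of_lt hNpos)
    repeat' apply add_nonneg
    all_goals
      first
        | exact mul_nonneg (Nat.cast_nonneg _) (Nat.cast_nonneg _)
        | exact mul_nonneg (mul_nonneg (by linarith) (Nat.cast_nonneg _)) (Nat.cast_nonneg _)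
  have hw9 : 0 ≤ w9 := by
    rw [hw9def]
    refine div_nonneg ?_ (le_of_lt hNpos)
    repeat' apply add_nonneg
    all_goals
      first
        | exact mul_nonneg (Nat.cast_nonneg _) (Nat.cast_nonneg _)
        | exact mul_nonneg (mul_nonneg (by linarith) (Nat.cast_nonneg _)) (Nat.cast_nonneg _)
  have hw10 : 0 ≤ w10 := by
    rw [hw10def]
    refine div_nonneg ?_ (le_of_lt hNpos)
    repeat' apply add_nonneg
    all_goals
      first
        | exact mul_nonneg (Nat.cast_nonneg _) (Nat.cast_nonneg _)
        | exact mul_nonneg (mul_nonneg (by linarith) (Nat.cast_nonneg _)) (Nat.cast_nonneg _)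
  have hw11 : 0 ≤ w11 := by
    rw [hw11def]
    refine div_nonneg ?_ (le_of_lt hNpos)
    repeat' apply add_nonneg
    all_goals
      first
        | exact mul_nonneg (Nat.cast_nonneg _) (Nat.cast_nonneg _)
        | exact mul_nonneg (mul_nonneg (by linarith) (Nat.cast_nonneg _)) (Nat.cast_nonneg _)
  have hw12 : 0 ≤ w12 := by
    rw [hw12def]
    refine div_nonneg ?_ (le_of_lt hNpos)
    repeat' apply add_nonneg
    all_goals
      first
        | exact mul_nonneg (Nat.cast_nonneg _) (Nat.cast_nonneg _)
        | exact mul_nonneg (mul_nonneg (by linarith) (Nat.cast_nonneg _)) (Nat.cast_nonneg _)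
  have hw13 : 0 ≤ w13 := by
    rw [hw13def]
    refine div_nonneg ?_ (le_of_lt hNpos)
    repeat' apply add_nonneg
    all_goals
      first
        | exact mul_nonneg (Nat.cast_nonneg _) (Nat.cast_nonneg _)
        | exact mul_nonneg (mul_nonneg (by linarith) (Nat.cast_nonneg _)) (Nat.cast_nonneg _)
  have hw14 : 0 ≤ w14 := by
    rw [hw14def]
    refine div_nonneg ?_ (le_of_lt hNpos)
    repeat' apply add_nonneg
    all_goals
      first
        | exact mul_nonneg (Nat.cast_nonneg _) (Nat.cast_nonneg _)
        | exact mul_nonneg (mul_nonneg (by linarith) (Nat.cast_nonneg _)) (Nat.cast_nonneg _)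
  have hw15 : 0 ≤ w15 := by
    rw [hw15def]
    refine div_nonneg ?_ (le_of_lt hNpos)
    repeat' apply add_nonneg
    all_goals
      first
        | exact mul_nonneg (Nat.cast_nonneg _) (Nat.cast_nonneg _)
        | exact mul_nonneg (mul_nonneg (by linarith) (Nat.cast_nonneg _)) (Nat.cast_nonneg _)
  have hw16 : 0 ≤ w16 := by
    rw [hw16def]
    refine div_nonneg ?_ (le_of_lt hNpos)
    repeat' apply add_nonneg
    all_goals
      first
        | exact mul_nonneg (Nat.cast_nonneg _) (Nat.cast_nonneg _)
        | exact mul_nonneg (mul_nonneg (by linarith) (Nat.cast_nonneg _)) (Nat.cast_nonneg _)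
  obtain ⟨ν, hνdef⟩ : ∃ ν : Measure ((ℕ×ℕ×ℕ) × (ℕ×ℕ×ℕ)), ν =
    ENNReal.ofReal w1 • Measure.dirac (((x1-1, x2, u+1), (y1-1, y2, v+1)) : (ℕ×ℕ×ℕ) × (ℕ×ℕ×ℕ)) +
    ENNReal.ofReal w2 • Measure.dirac (((x1, x2, u), (y1-1, y2, v+1)) : (ℕ×ℕ×ℕ) × (ℕ×ℕ×ℕ)) +
    ENNReal.ofReal w3 • Measure.dirac (((x1-1, x2, u+1), (y1, y2+1, v-1)) : (ℕ×ℕ×ℕ) × (ℕ×ℕ×ℕ)) +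
    ENNReal.ofReal w4 • Measure.dirac (((x1-1, x2, u+1), (y1, y2, v)) : (ℕ×ℕ×ℕ) × (ℕ×ℕ×ℕ)) +
    ENNReal.ofReal w5 • Measure.dirac (((x1, x2, u), (y1, y2+1, v-1)) : (ℕ×ℕ×ℕ) × (ℕ×ℕ×ℕ)) +
    ENNReal.ofReal w6 • Measure.dirac (((x1, x2, u), (y1+1, y2, v-1)) : (ℕ×ℕ×ℕ) × (ℕ×ℕ×ℕ)) +
    ENNReal.ofReal w7 • Measure.dirac (((x1, x2, u), (y1, y2-1, v+1)) : (ℕ×ℕ×ℕ) × (ℕ×ℕ×ℕ)) +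
    ENNReal.ofReal w8 • Measure.dirac (((x1, x2, u), (y1, y2, v)) : (ℕ×ℕ×ℕ) × (ℕ×ℕ×ℕ)) +
    ENNReal.ofReal w9 • Measure.dirac (((x1+1, x2, u-1), (y1+1, y2, v-1)) : (ℕ×ℕ×ℕ) × (ℕ×ℕ×ℕ)) +
    ENNReal.ofReal w10 • Measure.dirac (((x1+1, x2, u-1), (y1, y2, v)) : (ℕ×ℕ×ℕ) × (ℕ×ℕ×ℕ)) +
    ENNReal.ofReal w11 • Measure.dirac (((x1+1, x2, u-1), (y1, y2+1, v-1)) : (ℕ×ℕ×ℕ) × (ℕ×ℕ×ℕ)) +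
    ENNReal.ofReal w12 • Measure.dirac (((x1, x2+1, u-1), (y1, y2+1, v-1)) : (ℕ×ℕ×ℕ) × (ℕ×ℕ×ℕ)) +
    ENNReal.ofReal w13 • Measure.dirac (((x1+1, x2, u-1), (y1, y2-1, v+1)) : (ℕ×ℕ×ℕ) × (ℕ×ℕ×ℕ)) +
    ENNReal.ofReal w14 • Measure.dirac (((x1, x2+1, u-1), (y1, y2, v)) : (ℕ×ℕ×ℕ) × (ℕ×ℕ×ℕ)) +
    ENNReal.ofReal w15 • Measure.dirac (((x1, x2-1, u+1), (y1, y2-1, v+1)) : (ℕ×ℕ×ℕ) × (ℕ×ℕ×ℕ)) +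
    ENNReal.ofReal w16 • Measure.dirac (((x1, x2-1, u+1), (y1, y2, v)) : (ℕ×ℕ×ℕ) × (ℕ×ℕ×ℕ)) := ⟨_, rfl⟩
  refine ⟨ν, ⟨?_⟩, ?_, ?_, ?_⟩
  · rw [hνdef]
    simp only [Measure.add_apply, Measure.smul_apply, smul_eq_mul, measure_univ, mul_one]
    rw [← ENNReal.ofReal_add hw1 hw2, ← ENNReal.ofReal_add (by linarith) hw3, ← ENNReal.ofReal_add (by linarith) hw4, ← ENNReal.ofReal_add (by linarith) hw5, ← ENNReal.ofReal_add (by linarith) hw6, ← ENNReal.ofReal_add (by linarith) hw7, ← ENNReal.ofReal_add (by linarith) hw8, ← ENNReal.ofReal_add (by linarith) hw9, ← ENNReal.ofReal_add (by linarith) hw10, ← ENNReal.ofReal_add (by linarith) hw11, ← ENNReal.ofReal_add (by linarith) hw12, ← ENNReal.ofReal_add (by linarith) hw13, ← ENNReal.ofReal_add (by linarith) hw14, ← ENNReal.ofReal_add (by linarith) hw15, ← ENNReal.ofReal_add (by linarith) hw16]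
    rw [show w1+w2+w3+w4+w5+w6+w7+w8+w9+w10+w11+w12+w13+w14+w15+w16 = 1 by
      rw [hw1def, hw2def, hw3def, hw4def, hw5def, hw6def, hw7def, hw8def, hw9def, hw10def,
        hw11def, hw12def, hw13def, hw14def, hw15def, hw16def, rn]
      field_simp
      ring]
    exact ENNReal.ofReal_one
  · have mapadd : ∀ (μ ρ : Measure ((ℕ×ℕ×ℕ) × (ℕ×ℕ×ℕ))),
        (μ + ρ).map Prod.fst = μ.map Prod.fst + ρ.map Prod.fst := fun μ ρ =>
      Measure.map_add μ ρ measurable_fst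
    rw [hνdef]
    simp only [mapadd, Measure.map_smul, Measure.map_dirac' measurable_fst]
    rw [Stmt6Aux.usd_decomp n p x1 x2 u hp1 hstayX]
    have gA : ENNReal.ofReal ((1 - p) * (x1:ℝ) * (x2:ℝ) / (n:ℝ)^2) = ENNReal.ofReal w1 + ENNReal.ofReal w3 + ENNReal.ofReal w4 := by
      rw [← ENNReal.ofReal_add hw1 hw3, ← ENNReal.ofReal_add (by linarith) hw4]
      congr 1
      rw [hw1def, hw3def, hw4def, ← rabc]; ring
    have gB : ENNReal.ofReal ((x1:ℝ) * (x2:ℝ) / (n:ℝ)^2) = ENNReal.ofReal w15 + ENNReal.ofReal w16 := by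
      rw [← ENNReal.ofReal_add hw15 hw16]
      congr 1
      rw [hw15def, hw16def, ← rabc]; ring
    have gC : ENNReal.ofReal ((u:ℝ) * (x1:ℝ) / (n:ℝ)^2) = ENNReal.ofReal w9 + ENNReal.ofReal w10 + ENNReal.ofReal w11 + ENNReal.ofReal w13 := by
      rw [← ENNReal.ofReal_add hw9 hw10, ← ENNReal.ofReal_add (by linarith) hw11, ← ENNReal.ofReal_add (by linarith) hw13]
      congr 1
      rw [hw9def, hw10def, hw11def, hw13def, ← rabc, ← rde]; ring
    have gD : ENNReal.ofReal ((u:ℝ) * (x2:ℝ) / (n:ℝ)^2) = ENNReal.ofReal w12 + ENNReal.ofReal w14 := by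
      rw [← ENNReal.ofReal_add hw12 hw14]
      congr 1
      rw [hw12def, hw14def, ← rde]; ring
    have gS : ENNReal.ofReal (1 - ((2 - p) * (x1:ℝ) * (x2:ℝ) + (u:ℝ) * ((x1:ℝ) + (x2:ℝ))) / (n:ℝ)^2) = ENNReal.ofReal w2 + ENNReal.ofReal w5 + ENNReal.ofReal w6 + ENNReal.ofReal w7 + ENNReal.ofReal w8 := by
      rw [← ENNReal.ofReal_add hw2 hw5, ← ENNReal.ofReal_add (by linarith) hw6, ← ENNReal.ofReal_add (by linarith) hw7, ← ENNReal.ofReal_add (by linarith) hw8]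
      congr 1
      rw [hw2def, hw5def, hw6def, hw7def, hw8def, ← rabc, ← rde, rn]
      field_simp
      ring
    rw [gA, gB, gC, gD, gS, add_smul, add_smul, add_smul, add_smul, add_smul, add_smul,
      add_smul, add_smul, add_smul, add_smul, add_smul]
    abel
  · have mapadd : ∀ (μ ρ : Measure ((ℕ×ℕ×ℕ) × (ℕ×ℕ×ℕ))),
        (μ + ρ).map Prod.snd = μ.map Prod.snd + ρ.map Prod.snd := fun μ ρ =>
      Measure.map_add μ ρ measurable_snd
    rw [hνdef]
    simp only [mapadd, Measure.map_smul, Measure.map_dirac' measurable_snd]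
    rw [Stmt6Aux.usd_decomp n pt y1 y2 v hpt1 hstayY]
    have gA : ENNReal.ofReal ((1 - pt) * (y1:ℝ) * (y2:ℝ) / (n:ℝ)^2) = ENNReal.ofReal w1 + ENNReal.ofReal w2 := by
      rw [← ENNReal.ofReal_add hw1 hw2]
      congr 1
      rw [hw1def, hw2def, ← rcef]; ring
    have gB : ENNReal.ofReal ((y1:ℝ) * (y2:ℝ) / (n:ℝ)^2) = ENNReal.ofReal w7 + ENNReal.ofReal w13 + ENNReal.ofReal w15 := by
      rw [← ENNReal.ofReal_add hw7 hw13, ← ENNReal.ofReal_add (by linarith) hw15]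
      congr 1
      rw [hw7def, hw13def, hw15def, ← rcef]; ring
    have gC : ENNReal.ofReal ((v:ℝ) * (y1:ℝ) / (n:ℝ)^2) = ENNReal.ofReal w6 + ENNReal.ofReal w9 := by
      rw [← ENNReal.ofReal_add hw6 hw9]
      congr 1
      rw [hw6def, hw9def, ← rbd]; ring
    have gD : ENNReal.ofReal ((v:ℝ) * (y2:ℝ) / (n:ℝ)^2) = ENNReal.ofReal w3 + ENNReal.ofReal w5 + ENNReal.ofReal w11 + ENNReal.ofReal w12 := by
      rw [← ENNReal.ofReal_add hw3 hw5, ← ENNReal.ofReal_add (by linarith) hw11, ← ENNReal.ofReal_add (by linarith) hw12]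
      congr 1
      rw [hw3def, hw5def, hw11def, hw12def, ← rbd, ← rcef]; ring
    have gS : ENNReal.ofReal (1 - ((2 - pt) * (y1:ℝ) * (y2:ℝ) + (v:ℝ) * ((y1:ℝ) + (y2:ℝ))) / (n:ℝ)^2) = ENNReal.ofReal w4 + ENNReal.ofReal w8 + ENNReal.ofReal w10 + ENNReal.ofReal w14 + ENNReal.ofReal w16 := by
      rw [← ENNReal.ofReal_add hw4 hw8, ← ENNReal.ofReal_add (by linarith) hw10, ← ENNReal.ofReal_add (by linarith) hw14, ← ENNReal.ofReal_add (by linarith) hw16]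
      congr 1
      rw [hw4def, hw8def, hw10def, hw14def, hw16def, ← rbd, ← rcef, rn]
      field_simp
      ring
    rw [gA, gB, gC, gD, gS, add_smul, add_smul, add_smul, add_smul, add_smul, add_smul,
      add_smul, add_smul, add_smul, add_smul, add_smul]
    abel
  · rw [ae_iff]
    have hS : MeasurableSet {pr : (ℕ×ℕ×ℕ) × (ℕ×ℕ×ℕ) | ¬ succeqC pr.1 pr.2} :=
      (Set.to_countable _).measurableSet
    have dz : ∀ (z : (ℕ×ℕ×ℕ) × (ℕ×ℕ×ℕ)) (wt : ℝ≥0∞), succeqC z.1 z.2 →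
        wt * Measure.dirac z {pr : (ℕ×ℕ×ℕ) × (ℕ×ℕ×ℕ) | ¬ succeqC pr.1 pr.2} = 0 := by
      intro z wt hz
      rw [Measure.dirac_apply' _ hS, Set.indicator_of_notMem (by simpa using hz), mul_zero]
    rw [hνdef]
    simp only [Measure.add_apply, Measure.smul_apply, smul_eq_mul]
    have t1 : ENNReal.ofReal w1 * Measure.dirac (((x1-1, x2, u+1), (y1-1, y2, v+1)) : (ℕ×ℕ×ℕ) × (ℕ×ℕ×ℕ)) {pr : (ℕ×ℕ×ℕ) × (ℕ×ℕ×ℕ) | ¬ succeqC pr.1 pr.2} = 0 := by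
      rcases Nat.eq_zero_or_pos y1 with h | h
      · have hz : w1 = 0 := by rw [hw1def, h]; push_cast; ring
        rw [hz, ENNReal.ofReal_zero, zero_mul]
      · exact dz _ _ (Stmt6Aux.succeqC_mk (by omega) (by omega))
    have t2 : ENNReal.ofReal w2 * Measure.dirac (((x1, x2, u), (y1-1, y2, v+1)) : (ℕ×ℕ×ℕ) × (ℕ×ℕ×ℕ)) {pr : (ℕ×ℕ×ℕ) × (ℕ×ℕ×ℕ) | ¬ succeqC pr.1 pr.2} = 0 := by
      rcases Nat.eq_zero_or_pos y1 with h | h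
      · have hz : w2 = 0 := by rw [hw2def, h]; push_cast; ring
        rw [hz, ENNReal.ofReal_zero, zero_mul]
      · exact dz _ _ (Stmt6Aux.succeqC_mk (by omega) (by omega))
    have t3 : ENNReal.ofReal w3 * Measure.dirac (((x1-1, x2, u+1), (y1, y2+1, v-1)) : (ℕ×ℕ×ℕ) × (ℕ×ℕ×ℕ)) {pr : (ℕ×ℕ×ℕ) × (ℕ×ℕ×ℕ) | ¬ succeqC pr.1 pr.2} = 0 := by
      rcases Nat.eq_zero_or_pos b with h | h
      · have hz : w3 = 0 := by rw [hw3def, h]; push_cast; ring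
        rw [hz, ENNReal.ofReal_zero, zero_mul]
      · exact dz _ _ (Stmt6Aux.succeqC_mk (by omega) (by omega))
    have t4 : ENNReal.ofReal w4 * Measure.dirac (((x1-1, x2, u+1), (y1, y2, v)) : (ℕ×ℕ×ℕ) × (ℕ×ℕ×ℕ)) {pr : (ℕ×ℕ×ℕ) × (ℕ×ℕ×ℕ) | ¬ succeqC pr.1 pr.2} = 0 := by
      rcases Nat.eq_zero_or_pos c with h | h
      · have hz : w4 = 0 := by rw [hw4def, h]; push_cast; ring
        rw [hz, ENNReal.ofReal_zero, zero_mul]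
      · exact dz _ _ (Stmt6Aux.succeqC_mk (by omega) (by omega))
    have t5 : ENNReal.ofReal w5 * Measure.dirac (((x1, x2, u), (y1, y2+1, v-1)) : (ℕ×ℕ×ℕ) × (ℕ×ℕ×ℕ)) {pr : (ℕ×ℕ×ℕ) × (ℕ×ℕ×ℕ) | ¬ succeqC pr.1 pr.2} = 0 := by
      exact dz _ _ (Stmt6Aux.succeqC_mk (by omega) (by omega))
    have t6 : ENNReal.ofReal w6 * Measure.dirac (((x1, x2, u), (y1+1, y2, v-1)) : (ℕ×ℕ×ℕ) × (ℕ×ℕ×ℕ)) {pr : (ℕ×ℕ×ℕ) × (ℕ×ℕ×ℕ) | ¬ succeqC pr.1 pr.2} = 0 := by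
      rcases Nat.eq_zero_or_pos b with h | h
      · have hz : w6 = 0 := by rw [hw6def, h]; push_cast; ring
        rw [hz, ENNReal.ofReal_zero, zero_mul]
      · exact dz _ _ (Stmt6Aux.succeqC_mk (by omega) (by omega))
    have t7 : ENNReal.ofReal w7 * Measure.dirac (((x1, x2, u), (y1, y2-1, v+1)) : (ℕ×ℕ×ℕ) × (ℕ×ℕ×ℕ)) {pr : (ℕ×ℕ×ℕ) × (ℕ×ℕ×ℕ) | ¬ succeqC pr.1 pr.2} = 0 := by
      rcases Nat.eq_zero_or_pos c with h | h
      · have hz : w7 = 0 := by rw [hw7def, h]; push_cast; ring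
        rw [hz, ENNReal.ofReal_zero, zero_mul]
      · exact dz _ _ (Stmt6Aux.succeqC_mk (by omega) (by omega))
    have t8 : ENNReal.ofReal w8 * Measure.dirac (((x1, x2, u), (y1, y2, v)) : (ℕ×ℕ×ℕ) × (ℕ×ℕ×ℕ)) {pr : (ℕ×ℕ×ℕ) × (ℕ×ℕ×ℕ) | ¬ succeqC pr.1 pr.2} = 0 := by
      exact dz _ _ (Stmt6Aux.succeqC_mk (by omega) (by omega))
    have t9 : ENNReal.ofReal w9 * Measure.dirac (((x1+1, x2, u-1), (y1+1, y2, v-1)) : (ℕ×ℕ×ℕ) × (ℕ×ℕ×ℕ)) {pr : (ℕ×ℕ×ℕ) × (ℕ×ℕ×ℕ) | ¬ succeqC pr.1 pr.2} = 0 := by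
      rcases Nat.eq_zero_or_pos d with h | h
      · have hz : w9 = 0 := by rw [hw9def, h]; push_cast; ring
        rw [hz, ENNReal.ofReal_zero, zero_mul]
      · exact dz _ _ (Stmt6Aux.succeqC_mk (by omega) (by omega))
    have t10 : ENNReal.ofReal w10 * Measure.dirac (((x1+1, x2, u-1), (y1, y2, v)) : (ℕ×ℕ×ℕ) × (ℕ×ℕ×ℕ)) {pr : (ℕ×ℕ×ℕ) × (ℕ×ℕ×ℕ) | ¬ succeqC pr.1 pr.2} = 0 := by
      exact dz _ _ (Stmt6Aux.succeqC_mk (by omega) (by omega))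
    have t11 : ENNReal.ofReal w11 * Measure.dirac (((x1+1, x2, u-1), (y1, y2+1, v-1)) : (ℕ×ℕ×ℕ) × (ℕ×ℕ×ℕ)) {pr : (ℕ×ℕ×ℕ) × (ℕ×ℕ×ℕ) | ¬ succeqC pr.1 pr.2} = 0 := by
      exact dz _ _ (Stmt6Aux.succeqC_mk (by omega) (by omega))
    have t12 : ENNReal.ofReal w12 * Measure.dirac (((x1, x2+1, u-1), (y1, y2+1, v-1)) : (ℕ×ℕ×ℕ) × (ℕ×ℕ×ℕ)) {pr : (ℕ×ℕ×ℕ) × (ℕ×ℕ×ℕ) | ¬ succeqC pr.1 pr.2} = 0 := by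
      rcases Nat.eq_zero_or_pos d with h | h
      · have hz : w12 = 0 := by rw [hw12def, h]; push_cast; ring
        rw [hz, ENNReal.ofReal_zero, zero_mul]
      · exact dz _ _ (Stmt6Aux.succeqC_mk (by omega) (by omega))
    have t13 : ENNReal.ofReal w13 * Measure.dirac (((x1+1, x2, u-1), (y1, y2-1, v+1)) : (ℕ×ℕ×ℕ) × (ℕ×ℕ×ℕ)) {pr : (ℕ×ℕ×ℕ) × (ℕ×ℕ×ℕ) | ¬ succeqC pr.1 pr.2} = 0 := by
      rcases Nat.eq_zero_or_pos e with h | h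
      · have hz : w13 = 0 := by rw [hw13def, h]; push_cast; ring
        rw [hz, ENNReal.ofReal_zero, zero_mul]
      · exact dz _ _ (Stmt6Aux.succeqC_mk (by omega) (by omega))
    have t14 : ENNReal.ofReal w14 * Measure.dirac (((x1, x2+1, u-1), (y1, y2, v)) : (ℕ×ℕ×ℕ) × (ℕ×ℕ×ℕ)) {pr : (ℕ×ℕ×ℕ) × (ℕ×ℕ×ℕ) | ¬ succeqC pr.1 pr.2} = 0 := by
      rcases Nat.eq_zero_or_pos e with h | h
      · have hz : w14 = 0 := by rw [hw14def, h]; push_cast; ring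
        rw [hz, ENNReal.ofReal_zero, zero_mul]
      · exact dz _ _ (Stmt6Aux.succeqC_mk (by omega) (by omega))
    have t15 : ENNReal.ofReal w15 * Measure.dirac (((x1, x2-1, u+1), (y1, y2-1, v+1)) : (ℕ×ℕ×ℕ) × (ℕ×ℕ×ℕ)) {pr : (ℕ×ℕ×ℕ) × (ℕ×ℕ×ℕ) | ¬ succeqC pr.1 pr.2} = 0 := by
      exact dz _ _ (Stmt6Aux.succeqC_mk (by omega) (by omega))
    have t16 : ENNReal.ofReal w16 * Measure.dirac (((x1, x2-1, u+1), (y1, y2, v)) : (ℕ×ℕ×ℕ) × (ℕ×ℕ×ℕ)) {pr : (ℕ×ℕ×ℕ) × (ℕ×ℕ×ℕ) | ¬ succeqC pr.1 pr.2} = 0 := by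
      exact dz _ _ (Stmt6Aux.succeqC_mk (by omega) (by omega))
    rw [t1, t2, t3, t4, t5, t6, t7, t8, t9, t10, t11, t12, t13, t14, t15, t16]
    norm_num
end

section
/- For every p ∈ [0,1] and every configuration (x₁,x₂,u), the one-step conditional expectation of the weighted bias of USD_p satisfies the exact identity E[Δ_w(t+1) − Δ_w(t) | X(t) = (x₁,x₂,u)] = u·(x₁ − (1−p)·x₂)/n². In particular, if Δ_w(t) ≥ 0 then (Δ_w(t))_{t≥0} has nonnegative one-step drift at time t. -/
open MeasureTheory

private lemma ite_mul_fun {α : Type*} [DecidableEq α] (a d : α) (w : ℝ) (r : α → ℝ) :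
    (if d = a then w else 0) * r d = (if d = a then w * r a else 0) := by
  split_ifs with h
  · rw [h]
  · simp

private lemma tsum_usd (n : ℕ) (p : ℝ) (c : ℕ × ℕ × ℕ) :
    (∑' d : ℕ × ℕ × ℕ, usdStep n p c d * dw p d) =
      (1 - p) * (c.1 : ℝ) * (c.2.1 : ℝ) / (n : ℝ) ^ 2 * dw p (c.1 - 1, c.2.1, c.2.2 + 1) +
      (c.1 : ℝ) * (c.2.1 : ℝ) / (n : ℝ) ^ 2 * dw p (c.1, c.2.1 - 1, c.2.2 + 1) +
      (c.2.2 : ℝ) * (c.1 : ℝ) / (n : ℝ) ^ 2 * dw p (c.1 + 1, c.2.1, c.2.2 - 1) +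
      (c.2.2 : ℝ) * (c.2.1 : ℝ) / (n : ℝ) ^ 2 * dw p (c.1, c.2.1 + 1, c.2.2 - 1) +
      (1 - ((2 - p) * (c.1 : ℝ) * (c.2.1 : ℝ) + (c.2.2 : ℝ) * ((c.1 : ℝ) + (c.2.1 : ℝ))) /
        (n : ℝ) ^ 2) * dw p c := by
  have hfun : ∀ d : ℕ × ℕ × ℕ, usdStep n p c d * dw p d =
      (if d = (c.1 - 1, c.2.1, c.2.2 + 1) then
        (1 - p) * (c.1 : ℝ) * (c.2.1 : ℝ) / (n : ℝ) ^ 2 * dw p (c.1 - 1, c.2.1, c.2.2 + 1)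
        else 0) +
      (if d = (c.1, c.2.1 - 1, c.2.2 + 1) then
        (c.1 : ℝ) * (c.2.1 : ℝ) / (n : ℝ) ^ 2 * dw p (c.1, c.2.1 - 1, c.2.2 + 1) else 0) +
      (if d = (c.1 + 1, c.2.1, c.2.2 - 1) then
        (c.2.2 : ℝ) * (c.1 : ℝ) / (n : ℝ) ^ 2 * dw p (c.1 + 1, c.2.1, c.2.2 - 1) else 0) +
      (if d = (c.1, c.2.1 + 1, c.2.2 - 1) then
        (c.2.2 : ℝ) * (c.2.1 : ℝ) / (n : ℝ) ^ 2 * dw p (c.1, c.2.1 + 1, c.2.2 - 1) else 0) +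
      (if d = c then
        (1 - ((2 - p) * (c.1 : ℝ) * (c.2.1 : ℝ) + (c.2.2 : ℝ) * ((c.1 : ℝ) + (c.2.1 : ℝ))) /
          (n : ℝ) ^ 2) * dw p c else 0) := by
    intro d
    rw [usdStep, add_mul, add_mul, add_mul, add_mul,
      ite_mul_fun, ite_mul_fun, ite_mul_fun, ite_mul_fun, ite_mul_fun]
  have hs : HasSum (fun d => usdStep n p c d * dw p d)
      ((1 - p) * (c.1 : ℝ) * (c.2.1 : ℝ) / (n : ℝ) ^ 2 * dw p (c.1 - 1, c.2.1, c.2.2 + 1) +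
      (c.1 : ℝ) * (c.2.1 : ℝ) / (n : ℝ) ^ 2 * dw p (c.1, c.2.1 - 1, c.2.2 + 1) +
      (c.2.2 : ℝ) * (c.1 : ℝ) / (n : ℝ) ^ 2 * dw p (c.1 + 1, c.2.1, c.2.2 - 1) +
      (c.2.2 : ℝ) * (c.2.1 : ℝ) / (n : ℝ) ^ 2 * dw p (c.1, c.2.1 + 1, c.2.2 - 1) +
      (1 - ((2 - p) * (c.1 : ℝ) * (c.2.1 : ℝ) + (c.2.2 : ℝ) * ((c.1 : ℝ) + (c.2.1 : ℝ))) /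
        (n : ℝ) ^ 2) * dw p c) := by
    simp only [hfun]
    exact ((((hasSum_ite_eq _ _).add (hasSum_ite_eq _ _)).add (hasSum_ite_eq _ _)).add
      (hasSum_ite_eq _ _)).add (hasSum_ite_eq _ _)
  exact hs.tsum_eq

/-- For every `p ∈ [0,1]` and every configuration `(x₁,x₂,u)`, the
one-step conditional expected change of the weighted bias of `USD_p` equals
`u·(x₁ - (1-p)·x₂)/n²`; in particular, if `Δ_w ≥ 0` the one-step drift is nonnegative. -/
theorem stmt_7 (n : ℕ) (hn : 2 ≤ n) (p : ℝ) (hp : p ∈ Set.Icc (0 : ℝ) 1)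
    (c : ℕ × ℕ × ℕ) (hc : c.1 + c.2.1 + c.2.2 = n) :
    ((∑' d : ℕ × ℕ × ℕ, usdStep n p c d * dw p d) - dw p c =
      (c.2.2 : ℝ) * ((c.1 : ℝ) - (1 - p) * (c.2.1 : ℝ)) / (n : ℝ) ^ 2) ∧
    (0 ≤ dw p c → dw p c ≤ ∑' d : ℕ × ℕ × ℕ, usdStep n p c d * dw p d) := by
  obtain ⟨x1, x2, u⟩ := c
  have e1 : (1 - p) * (x1 : ℝ) * (x2 : ℝ) / (n : ℝ) ^ 2 * dw p (x1 - 1, x2, u + 1) =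
      (1 - p) * (x1 : ℝ) * (x2 : ℝ) / (n : ℝ) ^ 2 * (((x1 : ℝ) - 1) - (1 - p) * (x2 : ℝ)) := by
    rcases Nat.eq_zero_or_pos x1 with h | h
    · subst h; simp
    · have : ((x1 - 1 : ℕ) : ℝ) = (x1 : ℝ) - 1 := by
        rw [Nat.cast_sub h]; simp
      simp [dw, this]
  have e2 : (x1 : ℝ) * (x2 : ℝ) / (n : ℝ) ^ 2 * dw p (x1, x2 - 1, u + 1) =
      (x1 : ℝ) * (x2 : ℝ) / (n : ℝ) ^ 2 * ((x1 : ℝ) - (1 - p) * ((x2 : ℝ) - 1)) := by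
    rcases Nat.eq_zero_or_pos x2 with h | h
    · subst h; simp
    · have : ((x2 - 1 : ℕ) : ℝ) = (x2 : ℝ) - 1 := by
        rw [Nat.cast_sub h]; simp
      simp [dw, this]
  have hmain : (∑' d : ℕ × ℕ × ℕ, usdStep n p (x1, x2, u) d * dw p d) - dw p (x1, x2, u) =
      (u : ℝ) * ((x1 : ℝ) - (1 - p) * (x2 : ℝ)) / (n : ℝ) ^ 2 := by
    rw [tsum_usd]
    simp only at e1 e2 ⊢
    rw [e1, e2]
    simp only [dw, Nat.cast_add, Nat.cast_one]
    ring
  refine ⟨hmain, fun hdw => ?_⟩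
  have h2 : (∑' d : ℕ × ℕ × ℕ, usdStep n p (x1, x2, u) d * dw p d) =
      dw p (x1, x2, u) + (u : ℝ) * ((x1 : ℝ) - (1 - p) * (x2 : ℝ)) / (n : ℝ) ^ 2 := by
    linarith [hmain]
  rw [h2]
  have hdw' : (x1 : ℝ) - (1 - p) * (x2 : ℝ) = dw p (x1, x2, u) := rfl
  rw [hdw']
  have : 0 ≤ (u : ℝ) * dw p (x1, x2, u) / (n : ℝ) ^ 2 := by positivity
  linarith
end

section
/- Let p = 1 and let the chain USD_1 be started from the configuration with X₁(0) = 1, X₂(0) = n−1 and U(0) = 0. Let T = inf{t ≥ 0 : X₂(t) = 0}. Then Pr[T ≤ 7·n²·log² n] ≥ 1 − n^{-2}. -/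
open MeasureTheory

/-!
For `p = 1` Opinion 1 never loses an agent, so the chain stays among the configurations with
`x₁ ≥ 1`. There the potential `V = b ^ x₂ / x₁` (and `V = 0` once `x₂ = 0`), with
`b = 1 + 1 / (2n)`, is a supermartingale contracting by `1 - δ` per step,
`δ = (n - 1) / ((2n + 1) n²)`: losing an Opinion-2 agent divides `V` by `b`, Opinion 1 recruiting
an undecided agent lowers `1 / x₁`, and these outweigh Opinion 2 recruiting. Since
`(n - 1) / b · V ≥ 1` while `x₂ ≠ 0`, Markov's inequality bounds `Pr[X₂(t) ≠ 0]` by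
`(n - 1) / b · (1 - δ) ^ t · b ^ (n - 1) ≤ n · exp (1/2 - δ t)`, which is below `n⁻²` for
`t = ⌊7 n² log² n⌋`.
-/

open Finset

namespace MarkovChain

section PathSums

variable {α : Type*} [DecidableEq α] (S : Finset α) (K : α → α → ℝ) (x₀ : α)

noncomputable def pathWeight {t : ℕ} (g : Fin (t + 1) → α) : ℝ :=
  (if g 0 = x₀ then 1 else 0) * ∏ i : Fin t, K (g i.castSucc) (g i.succ)

-- The expectation of `F (X t)` over the trajectories that stay in `S`.
noncomputable def pathExpect (t : ℕ) (F : α → ℝ) : ℝ :=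
  ∑ g ∈ Fintype.piFinset fun _ : Fin (t + 1) => S, pathWeight K x₀ g * F (g (Fin.last t))

variable {S K x₀}

lemma pathExpect_zero (hx₀ : x₀ ∈ S) (F : α → ℝ) :
    pathExpect S K x₀ 0 F = F x₀ := by
  rw [pathExpect, sum_eq_single_of_mem (fun _ => x₀) (Fintype.mem_piFinset.2 fun _ => hx₀)]
  · simp [pathWeight]
  · intro g _ hg
    have : g 0 ≠ x₀ := fun h => hg (funext fun i => by rw [Fin.fin_one_eq_zero i, h])
    simp [pathWeight, this]

lemma pathWeight_snoc {t : ℕ} (g : Fin (t + 1) → α) (c : α) :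
    pathWeight K x₀ (Fin.snoc g c : Fin (t + 2) → α) =
      pathWeight K x₀ g * K (g (Fin.last t)) c := by
  simp only [pathWeight, Fin.prod_univ_castSucc, Fin.succ_castSucc, Fin.succ_last,
    Fin.snoc_castSucc, Fin.snoc_last, mul_assoc]
  rw [← Fin.castSucc_zero, Fin.snoc_castSucc]

lemma pathExpect_succ (t : ℕ) (F : α → ℝ) :
    pathExpect S K x₀ (t + 1) F = pathExpect S K x₀ t fun c => ∑ d ∈ S, K c d * F d := by
  have := filter_piFinset_eq_map_snocEquiv (fun _ : Fin (t + 2) => S) (fun _ => True)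
  simp only [filter_true] at this
  rw [pathExpect, this, sum_map, sum_product_right, pathExpect]
  refine sum_congr rfl fun g _ => ?_
  rw [mul_sum]
  refine sum_congr rfl fun c _ => ?_
  change pathWeight K x₀ (Fin.snoc g c : Fin (t + 2) → α) *
    F ((Fin.snoc g c : Fin (t + 2) → α) (Fin.last (t + 1))) = _
  rw [pathWeight_snoc, Fin.snoc_last]
  ring

lemma pathWeight_nonneg (hK : ∀ c ∈ S, ∀ d, 0 ≤ K c d) {t : ℕ} {g : Fin (t + 1) → α}
    (hg : g ∈ Fintype.piFinset fun _ => S) : 0 ≤ pathWeight K x₀ g := by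
  rw [Fintype.mem_piFinset] at hg
  unfold pathWeight
  split_ifs
  · simpa using prod_nonneg fun i _ => hK _ (hg i.castSucc) (g i.succ)
  · simp

lemma pathExpect_mono (hK : ∀ c ∈ S, ∀ d, 0 ≤ K c d) {t : ℕ} {F G : α → ℝ}
    (h : ∀ c ∈ S, F c ≤ G c) : pathExpect S K x₀ t F ≤ pathExpect S K x₀ t G :=
  sum_le_sum fun _ hg => mul_le_mul_of_nonneg_left
    (h _ (Fintype.mem_piFinset.1 hg _)) (pathWeight_nonneg hK hg)

lemma pathExpect_congr {t : ℕ} {F G : α → ℝ} (h : ∀ c ∈ S, F c = G c) :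
    pathExpect S K x₀ t F = pathExpect S K x₀ t G :=
  sum_congr rfl fun _ hg => by rw [h _ (Fintype.mem_piFinset.1 hg _)]

lemma pathExpect_const_mul (t : ℕ) (C : ℝ) (F : α → ℝ) :
    pathExpect S K x₀ t (fun c => C * F c) = C * pathExpect S K x₀ t F := by
  simp only [pathExpect, mul_sum]
  exact sum_congr rfl fun _ _ => by ring

lemma pathExpect_add (t : ℕ) (F G : α → ℝ) :
    pathExpect S K x₀ t (fun c => F c + G c) =
      pathExpect S K x₀ t F + pathExpect S K x₀ t G := by
  simp only [pathExpect, mul_add, sum_add_distrib]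

lemma pathExpect_one (hrow : ∀ c ∈ S, ∑ d ∈ S, K c d = 1) (hx₀ : x₀ ∈ S) (t : ℕ) :
    pathExpect S K x₀ t (fun _ => 1) = 1 := by
  induction t with
  | zero => exact pathExpect_zero hx₀ _
  | succ t ih =>
    rw [pathExpect_succ, pathExpect_congr (G := fun _ => 1) fun c hc => by
      simp only [mul_one, hrow c hc], ih]

lemma pathExpect_le_of_drift (hK : ∀ c ∈ S, ∀ d, 0 ≤ K c d) (hx₀ : x₀ ∈ S) {V : α → ℝ}
    {r : ℝ} (hr : 0 ≤ r) (hV : ∀ c ∈ S, ∑ d ∈ S, K c d * V d ≤ r * V c) (t : ℕ) :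
    pathExpect S K x₀ t V ≤ r ^ t * V x₀ := by
  induction t with
  | zero => simp [pathExpect_zero hx₀]
  | succ t ih =>
    calc pathExpect S K x₀ (t + 1) V
        ≤ pathExpect S K x₀ t (fun c => r * V c) := by
          rw [pathExpect_succ]; exact pathExpect_mono hK hV
      _ = r * pathExpect S K x₀ t V := pathExpect_const_mul t r V
      _ ≤ r ^ (t + 1) * V x₀ := by
          rw [pow_succ', mul_assoc]; exact mul_le_mul_of_nonneg_left ih hr

end PathSums

section Cylinders

lemma measurableSet_cylinder {α : Type*} [MeasurableSpace α] [MeasurableSingletonClass α]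
    {t : ℕ} (g : Fin (t + 1) → α) : MeasurableSet {ω : ℕ → α | ∀ i : Fin (t + 1), ω i = g i} := by
  simp only [Set.ofPred_forall]
  exact MeasurableSet.iInter fun i => measurable_pi_apply _ (measurableSet_singleton _)

variable {α : Type*} [DecidableEq α] [MeasurableSpace α]
  {S : Finset α} {K : α → α → ℝ} {x₀ : α} {μ : Measure (ℕ → α)}

-- The cylinder condition of `IsUSD`, for an arbitrary kernel `K`.
def IsLaw (K : α → α → ℝ) (x₀ : α) (μ : Measure (ℕ → α)) : Prop :=
  ∀ (t : ℕ) (seq : ℕ → α), (μ {ω | ∀ i ≤ t, ω i = seq i}).toReal =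
    (if seq 0 = x₀ then (1 : ℝ) else 0) * ∏ i ∈ range t, K (seq i) (seq (i + 1))

lemma IsLaw.measure_cylinder (hμ : IsLaw K x₀ μ) {t : ℕ} (g : Fin (t + 1) → α) :
    (μ {ω | ∀ i : Fin (t + 1), ω i = g i}).toReal = pathWeight K x₀ g := by
  set seq : ℕ → α := fun i => g (Fin.ofNat (t + 1) i)
  have hseq (i : Fin (t + 1)) : seq i = g i := by
    simp only [seq]; congr 1; ext; simp
  have hset : {ω : ℕ → α | ∀ i : Fin (t + 1), ω i = g i} = {ω | ∀ i ≤ t, ω i = seq i} := by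
    ext ω
    simp only [Set.mem_ofPred_eq]
    refine ⟨fun h i hi => ?_, fun h i => ?_⟩
    · exact (h ⟨i, Nat.lt_succ_of_le hi⟩).trans (hseq _).symm
    · exact (h i (Nat.le_of_lt_succ i.isLt)).trans (hseq i)
  rw [hset, hμ, pathWeight, ← Fin.prod_univ_eq_prod_range]
  congr 2
  ext i
  exact congrArg₂ K (hseq i.castSucc) (hseq i.succ)

lemma IsLaw.pathExpect_indicator_le [MeasurableSingletonClass α] [IsFiniteMeasure μ]
    (hμ : IsLaw K x₀ μ) (P : α → Prop) [DecidablePred P] (t : ℕ) :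
    pathExpect S K x₀ t (fun c => if P c then 1 else 0) ≤ (μ {ω | P (ω t)}).toReal := by
  set good := {g ∈ Fintype.piFinset fun _ : Fin (t + 1) => S | P (g (Fin.last t))}
  set cyl : (Fin (t + 1) → α) → Set (ℕ → α) := fun g => {ω | ∀ i : Fin (t + 1), ω i = g i}
  have hdisj : (good : Set (Fin (t + 1) → α)).PairwiseDisjoint cyl :=
    fun g _ g' _ hne => Set.disjoint_left.2 fun ω hω hω' =>
      hne (funext fun i => (hω i).symm.trans (hω' i))
  have hsub : (⋃ g ∈ good, cyl g) ⊆ {ω | P (ω t)} := by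
    intro ω hω
    simp only [Set.mem_iUnion] at hω
    obtain ⟨g, hg, hωg⟩ := hω
    have := hωg (Fin.last t)
    simp only [Fin.val_last] at this
    rw [Set.mem_ofPred_eq, this]
    exact (mem_filter.1 hg).2
  calc pathExpect S K x₀ t (fun c => if P c then 1 else 0)
      = ∑ g ∈ good, (μ (cyl g)).toReal := by
        rw [pathExpect, sum_filter]
        refine sum_congr rfl fun g _ => ?_
        rw [hμ.measure_cylinder]
        split_ifs <;> simp
    _ = (μ (⋃ g ∈ good, cyl g)).toReal := by
        rw [measure_biUnion_finset hdisj fun g _ => measurableSet_cylinder g,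
          ENNReal.toReal_sum fun g _ => measure_ne_top μ _]
    _ ≤ (μ {ω | P (ω t)}).toReal := ENNReal.toReal_mono (measure_ne_top μ _) (measure_mono hsub)

theorem IsLaw.one_sub_le_measure_of_drift [MeasurableSingletonClass α]
    [IsFiniteMeasure μ] (hμ : IsLaw K x₀ μ) (hK : ∀ c ∈ S, ∀ d, 0 ≤ K c d)
    (hrow : ∀ c ∈ S, ∑ d ∈ S, K c d = 1) (hx₀ : x₀ ∈ S) {V : α → ℝ} {r : ℝ} (hr : 0 ≤ r)
    (hV : ∀ c ∈ S, ∑ d ∈ S, K c d * V d ≤ r * V c) (hV₀ : ∀ c ∈ S, 0 ≤ V c)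
    {P : α → Prop} [DecidablePred P] (hPV : ∀ c ∈ S, ¬P c → 1 ≤ V c) (t : ℕ) :
    1 - r ^ t * V x₀ ≤ (μ {ω | P (ω t)}).toReal := by
  have htotal : pathExpect S K x₀ t (fun c => if P c then 1 else 0) +
      pathExpect S K x₀ t (fun c => if P c then 0 else 1) = 1 := by
    rw [← pathExpect_add, pathExpect_congr (G := fun _ => 1) fun c _ => by
      split_ifs <;> norm_num]
    exact pathExpect_one hrow hx₀ t
  have hnot : pathExpect S K x₀ t (fun c => if P c then 0 else 1) ≤ pathExpect S K x₀ t V :=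
    pathExpect_mono hK fun c hc => by
      split_ifs with h
      · exact hV₀ c hc
      · exact hPV c hc h
  linarith [pathExpect_le_of_drift hK hx₀ hr hV t, hμ.pathExpect_indicator_le (S := S) P t]

end Cylinders

end MarkovChain

namespace StubbornUSD

open MarkovChain

def posConfigs (n : ℕ) : Finset (ℕ × ℕ × ℕ) :=
  {c ∈ range (n + 1) ×ˢ range (n + 1) ×ˢ range (n + 1) | c.1 + c.2.1 + c.2.2 = n ∧ 1 ≤ c.1}

lemma mem_posConfigs {n : ℕ} {c : ℕ × ℕ × ℕ} :
    c ∈ posConfigs n ↔ c.1 + c.2.1 + c.2.2 = n ∧ 1 ≤ c.1 := by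
  simp only [posConfigs, mem_filter, mem_product, mem_range, and_iff_right_iff_imp]
  omega

lemma usdStep_nonneg {n : ℕ} {p : ℝ} (hp₀ : 0 ≤ p) (hp₁ : p ≤ 1) {c : ℕ × ℕ × ℕ}
    (hc : c.1 + c.2.1 + c.2.2 = n) (d : ℕ × ℕ × ℕ) : 0 ≤ usdStep n p c d := by
  obtain ⟨x, y, u⟩ := c
  have hn : (x : ℝ) + y + u = n := by exact_mod_cast hc
  have hstay : (2 - p) * x * y + u * (x + y) ≤ (n : ℝ) ^ 2 := by
    rw [← hn]
    have : 0 ≤ p * x * y := by positivity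
    nlinarith [sq_nonneg (x : ℝ), sq_nonneg (y : ℝ), sq_nonneg (u : ℝ),
      mul_nonneg (Nat.cast_nonneg (α := ℝ) u) (Nat.cast_nonneg (α := ℝ) (x + y))]
  have : 0 ≤ 1 - p := by linarith
  unfold usdStep
  refine add_nonneg (add_nonneg (add_nonneg (add_nonneg ?_ ?_) ?_) ?_) ?_ <;> split_ifs <;>
    try positivity
  rw [sub_nonneg]
  exact div_le_one_of_le₀ hstay (by positivity)

lemma sum_usdStep_one_mul {n x y u : ℕ} (hc : (x, y, u) ∈ posConfigs n)
    (F : ℕ × ℕ × ℕ → ℝ) :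
    ∑ d ∈ posConfigs n, usdStep n 1 (x, y, u) d * F d =
      x * y / n ^ 2 * F (x, y - 1, u + 1) + u * x / n ^ 2 * F (x + 1, y, u - 1) +
        u * y / n ^ 2 * F (x, y + 1, u - 1) +
          (1 - (x * y + u * (x + y)) / n ^ 2) * F (x, y, u) := by
  have hc' := mem_posConfigs.1 hc
  dsimp only at hc'
  have hdrop {d : ℕ × ℕ × ℕ} {a : ℝ} (h : d ∈ posConfigs n ∨ a = 0) :
      (if d ∈ posConfigs n then a else 0) = a := by
    rcases h with h | h <;> simp [h]
  unfold usdStep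
  simp only [add_mul, ite_mul, zero_mul, sum_add_distrib, sum_ite_eq']
  rw [hdrop (by simp), hdrop ?A, hdrop ?B, hdrop ?C, hdrop (Or.inl hc)]
  · ring
  case A =>
    rcases Nat.eq_zero_or_pos y with rfl | hy
    · simp
    · exact Or.inl (mem_posConfigs.2 (by dsimp only; omega))
  all_goals
    rcases Nat.eq_zero_or_pos u with rfl | hu
    · simp
    · exact Or.inl (mem_posConfigs.2 (by dsimp only; omega))

lemma sum_usdStep_one {n x y u : ℕ} (hc : (x, y, u) ∈ posConfigs n) :
    ∑ d ∈ posConfigs n, usdStep n 1 (x, y, u) d = 1 := by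
  have h := sum_usdStep_one_mul hc fun _ => 1
  simp only [mul_one] at h
  rw [h]
  ring

noncomputable def potential (b : ℝ) (c : ℕ × ℕ × ℕ) : ℝ :=
  if c.2.1 = 0 then 0 else b ^ c.2.1 / c.1

lemma potential_nonneg {b : ℝ} (hb : 0 ≤ b) (c : ℕ × ℕ × ℕ) : 0 ≤ potential b c := by
  unfold potential
  split_ifs <;> positivity

lemma potential_initial {n : ℕ} (hn : 2 ≤ n) (b : ℝ) : potential b (1, n - 1, 0) = b ^ (n - 1) := by
  simp [potential, show n - 1 ≠ 0 by omega]

lemma one_le_potential {n : ℕ} {b : ℝ} (hb : 1 ≤ b) {c : ℕ × ℕ × ℕ} (hc : c ∈ posConfigs n)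
    (hy : c.2.1 ≠ 0) : 1 ≤ ((n : ℝ) - 1) / b * potential b c := by
  obtain ⟨x, y, u⟩ := c
  obtain ⟨hsum, hx⟩ := mem_posConfigs.1 hc
  dsimp only at hsum hx hy
  have hxn : (x : ℝ) ≤ n - 1 := by
    rw [le_sub_iff_add_le]; exact_mod_cast (by omega : x + 1 ≤ n)
  have hby : b ≤ b ^ y := le_self_pow₀ hb hy
  have hx₀ : (0 : ℝ) < x := by exact_mod_cast hx
  rw [potential, if_neg hy, div_mul_div_comm, one_le_div (by positivity)]
  nlinarith

-- Divided by `b ^ y / x` and multiplied by `N ^ 2`, the expected one-step change of the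
-- potential at `(x, y, u)` for `b = (2N + 1) / (2N)` is minus the right-hand side.
lemma drift_margin {N x y u : ℝ} (hx : 1 ≤ x) (hy : 1 ≤ y) (hu : 0 ≤ u) (hN : x + y + u = N) :
    (N - 1) / (2 * N + 1) ≤ x * y / (2 * N + 1) + u * x / (x + 1) - u * y / (2 * N) := by
  have hN₀ : 0 < N := by linarith
  have hxy : N - 1 - u ≤ x * y := by nlinarith [mul_nonneg (sub_nonneg.2 hx) (sub_nonneg.2 hy)]
  have hsmall : 1 / (2 * N + 1) + y / (2 * N) ≤ x / (x + 1) := by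
    calc 1 / (2 * N + 1) + y / (2 * N) ≤ 1 / (2 * N) + y / (2 * N) := by
          gcongr; linarith
      _ = (y + 1) / (2 * N) := by ring
      _ ≤ 1 / 2 := by rw [div_le_iff₀ (by positivity)]; linarith
      _ ≤ x / (x + 1) := by rw [le_div_iff₀ (by positivity)]; linarith
  calc (N - 1) / (2 * N + 1) = (N - 1 - u) / (2 * N + 1) + u * (1 / (2 * N + 1)) := by ring
    _ ≤ x * y / (2 * N + 1) + u * (x / (x + 1) - y / (2 * N)) := by
        gcongr; linarith
    _ = _ := by ring

def HasPotentialDrift (n : ℕ) (b δ : ℝ) : Prop :=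
  ∀ c ∈ posConfigs n,
    ∑ d ∈ posConfigs n, usdStep n 1 c d * potential b d ≤ (1 - δ) * potential b c

lemma hasPotentialDrift (n : ℕ) :
    HasPotentialDrift n ((2 * n + 1) / (2 * n)) ((n - 1) / ((2 * n + 1) * n ^ 2)) := by
  rintro ⟨x, y, u⟩ hc
  obtain ⟨hsum, hx⟩ := mem_posConfigs.1 hc
  dsimp only at hsum hx
  rw [sum_usdStep_one_mul hc]
  rcases Nat.eq_zero_or_pos y with rfl | hy
  · simp [potential]
  set N : ℝ := (n : ℝ)
  set b : ℝ := (2 * N + 1) / (2 * N)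
  have hN : x + y + u = N := by simp only [N]; exact_mod_cast hsum
  have hx₁ : (1 : ℝ) ≤ x := by exact_mod_cast hx
  have hy₁ : (1 : ℝ) ≤ y := by exact_mod_cast hy
  have hN₀ : 0 < N := by linarith [(Nat.cast_nonneg u : (0 : ℝ) ≤ u)]
  have hb : 0 < b := by positivity
  have hdown : potential b (x, y - 1, u + 1) ≤ b ^ y / (b * x) := by
    unfold potential
    split_ifs
    · positivity
    · rw [← pow_sub_one_mul (by omega : y ≠ 0), mul_comm b, mul_div_mul_right _ _ hb.ne']
  have hsideways : potential b (x + 1, y, u - 1) = b ^ y / (x + 1) := by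
    simp [potential, hy.ne']
  have hup : potential b (x, y + 1, u - 1) = b ^ y * b / x := by
    simp [potential, pow_succ]
  have hstay : potential b (x, y, u) = b ^ y / x := by
    simp [potential, hy.ne']
  rw [hsideways, hup, hstay]
  have hmargin := drift_margin hx₁ hy₁ (Nat.cast_nonneg u) hN
  calc _ ≤ x * y / N ^ 2 * (b ^ y / (b * x)) + u * x / N ^ 2 * (b ^ y / (x + 1)) +
        u * y / N ^ 2 * (b ^ y * b / x) + (1 - (x * y + u * (x + y)) / N ^ 2) * (b ^ y / x) := by
        gcongr
    _ = b ^ y / x * (1 - (x * y / (2 * N + 1) + u * x / (x + 1) - u * y / (2 * N)) / N ^ 2) := by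
        simp only [b]; field_simp; ring
    _ ≤ b ^ y / x * (1 - (N - 1) / (2 * N + 1) / N ^ 2) := by gcongr
    _ = _ := by rw [div_div, mul_comm]

lemma hasPotentialDrift_two : HasPotentialDrift 2 (3 / 2) (1 / 4) := by
  intro c hc
  have hc' := hc
  rw [show posConfigs 2 = {(1, 0, 1), (1, 1, 0), (2, 0, 0)} by decide] at hc'
  fin_cases hc' <;> rw [sum_usdStep_one_mul hc] <;> norm_num [potential]

lemma hasPotentialDrift_three : HasPotentialDrift 3 (4 / 3) (1 / 18) := by
  intro c hc
  have hc' := hc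
  rw [show posConfigs 3 = {(1, 0, 2), (1, 1, 1), (1, 2, 0), (2, 0, 1), (2, 1, 0), (3, 0, 0)} by
    decide] at hc'
  fin_cases hc' <;> rw [sum_usdStep_one_mul hc] <;> norm_num [potential]

theorem one_sub_le_measure_of_potential_drift {n : ℕ} (hn : 2 ≤ n)
    {μ : Measure (ℕ → ℕ × ℕ × ℕ)} (hμ : IsUSD n 1 (1, n - 1, 0) μ) {b δ : ℝ} (hb : 1 ≤ b)
    (hδ : δ ≤ 1) (hdrift : HasPotentialDrift n b δ) (t : ℕ) :
    1 - (n - 1) / b * ((1 - δ) ^ t * b ^ (n - 1)) ≤ (μ {ω | (ω t).2.1 = 0}).toReal := by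
  have := hμ.1
  have hn' : (2 : ℝ) ≤ n := by exact_mod_cast hn
  have hC : 0 ≤ ((n : ℝ) - 1) / b := div_nonneg (by linarith) (by linarith)
  have key := IsLaw.one_sub_le_measure_of_drift (S := posConfigs n) hμ.2
    (fun c hc => usdStep_nonneg zero_le_one le_rfl (mem_posConfigs.1 hc).1)
    (fun c hc => sum_usdStep_one hc)
    (mem_posConfigs.2 ⟨by dsimp only; omega, le_rfl⟩)
    (V := fun c => ((n : ℝ) - 1) / b * potential b c) (sub_nonneg.2 hδ)
    (fun c hc => by
      simp only [mul_left_comm _ (((n : ℝ) - 1) / b), ← mul_sum]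
      exact mul_le_mul_of_nonneg_left (hdrift c hc) hC)
    (fun c _ => mul_nonneg hC (potential_nonneg (by linarith) c))
    (fun c hc hy => one_le_potential hb hc hy) t
  rwa [potential_initial hn, mul_left_comm] at key

section Estimates

open Real

lemma pow_le_exp_half {n : ℕ} (hn : 1 ≤ n) :
    ((2 * (n : ℝ) + 1) / (2 * n)) ^ (n - 1) ≤ exp (1 / 2) := by
  have hN : (1 : ℝ) ≤ n := by exact_mod_cast hn
  have hbase : (2 * (n : ℝ) + 1) / (2 * n) ≤ exp (1 / (2 * n)) := by
    calc (2 * (n : ℝ) + 1) / (2 * n) = 1 / (2 * n) + 1 := by field_simp; ring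
      _ ≤ exp (1 / (2 * n)) := add_one_le_exp _
  calc ((2 * (n : ℝ) + 1) / (2 * n)) ^ (n - 1) ≤ exp (1 / (2 * n)) ^ (n - 1) := by
        gcongr
    _ = exp (((n - 1 : ℕ) : ℝ) * (1 / (2 * n))) := (exp_nat_mul _ _).symm
    _ ≤ exp (1 / 2) := by
        gcongr
        rw [Nat.cast_sub hn, Nat.cast_one, ← mul_div_assoc, mul_one,
          div_le_div_iff₀ (by positivity) two_pos]
        linarith

lemma three_mul_log_add_half_le {n : ℕ} (hn : 5 ≤ n) :
    3 * log n + 1 / 2 ≤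
      ((n : ℝ) - 1) / ((2 * n + 1) * n ^ 2) * ⌊7 * (n : ℝ) ^ 2 * log n ^ 2⌋₊ := by
  have hN : (5 : ℝ) ≤ n := by exact_mod_cast hn
  set L := log n
  have hL : 1.386 ≤ L := by
    have h4 : log 4 = 2 * log 2 := by
      rw [show (4 : ℝ) = 2 ^ 2 by norm_num, log_pow, Nat.cast_ofNat]
    linarith [log_two_gt_d9, log_le_log (by norm_num) (by linarith : (4 : ℝ) ≤ n)]
  set δ := ((n : ℝ) - 1) / ((2 * n + 1) * n ^ 2)
  have hδ₀ : 0 ≤ δ := div_nonneg (by linarith) (by positivity)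
  have hδ : δ ≤ 0.02 := by
    rw [div_le_iff₀ (by positivity)]
    nlinarith
  have hfloor : 7 * (n : ℝ) ^ 2 * L ^ 2 - 1 ≤ ⌊7 * (n : ℝ) ^ 2 * L ^ 2⌋₊ := by
    linarith [Nat.lt_floor_add_one (7 * (n : ℝ) ^ 2 * L ^ 2)]
  have hratio : (4 : ℝ) / 11 ≤ (n - 1) / (2 * n + 1) := by
    rw [div_le_div_iff₀ (by norm_num) (by linarith)]
    linarith
  calc 3 * L + 1 / 2 ≤ 7 * L ^ 2 * (4 / 11) - δ := by nlinarith
    _ ≤ 7 * L ^ 2 * ((n - 1) / (2 * n + 1)) - δ := by gcongr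
    _ = δ * (7 * (n : ℝ) ^ 2 * L ^ 2 - 1) := by simp only [δ]; field_simp
    _ ≤ δ * ⌊7 * (n : ℝ) ^ 2 * L ^ 2⌋₊ := by gcongr

lemma tail_estimate {n : ℕ} (hn : 5 ≤ n) :
    ((n : ℝ) - 1) / ((2 * n + 1) / (2 * n)) *
        ((1 - (n - 1) / ((2 * n + 1) * n ^ 2)) ^ ⌊7 * (n : ℝ) ^ 2 * log n ^ 2⌋₊ *
          ((2 * n + 1) / (2 * n)) ^ (n - 1)) ≤ ((n : ℝ) ^ 2)⁻¹ := by
  have hN : (5 : ℝ) ≤ n := by exact_mod_cast hn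
  set t := ⌊7 * (n : ℝ) ^ 2 * log n ^ 2⌋₊
  set δ := ((n : ℝ) - 1) / ((2 * n + 1) * n ^ 2)
  have hδ : δ ≤ 1 := by
    rw [div_le_one (by positivity)]
    nlinarith
  have hprefactor : ((n : ℝ) - 1) / ((2 * n + 1) / (2 * n)) ≤ n := by
    rw [div_le_iff₀ (by positivity), div_eq_mul_inv, mul_comm]
    nlinarith [mul_inv_cancel₀ (by positivity : (2 * (n : ℝ)) ≠ 0)]
  have hdecay : (1 - δ) ^ t ≤ exp (-(δ * t)) := by
    calc (1 - δ) ^ t ≤ exp (-δ) ^ t := pow_le_pow_left₀ (by linarith) (one_sub_le_exp_neg δ) t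
      _ = exp (-(δ * t)) := by rw [← exp_nat_mul]; ring_nf
  calc _ ≤ n * (exp (-(δ * t)) * exp (1 / 2)) :=
        mul_le_mul hprefactor (mul_le_mul hdecay (pow_le_exp_half (by omega)) (by positivity)
          (exp_nonneg _)) (mul_nonneg (pow_nonneg (by linarith) _) (by positivity)) (by positivity)
    _ = exp (log n + 1 / 2 - δ * t) := by
        rw [exp_sub, exp_add, exp_log (by positivity), exp_neg]; ring
    _ ≤ exp (-(2 * log n)) := exp_le_exp.2 (by linarith [three_mul_log_add_half_le hn])
    _ = ((n : ℝ) ^ 2)⁻¹ := by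
        rw [exp_neg, ← Nat.cast_ofNat, ← log_pow, exp_log (by positivity)]

def HasTailCertificate (n : ℕ) : Prop :=
  ∃ (b δ : ℝ) (t : ℕ), 1 ≤ b ∧ δ ≤ 1 ∧ HasPotentialDrift n b δ ∧
    (t : ℝ) ≤ 7 * (n : ℝ) ^ 2 * log n ^ 2 ∧
    ((n : ℝ) - 1) / b * ((1 - δ) ^ t * b ^ (n - 1)) ≤ ((n : ℝ) ^ 2)⁻¹

-- For `n ≤ 4` the exponential estimates of `tail_estimate` are too lossy; for `n ≤ 3` even the
-- choice of `b` has to be retuned.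
lemma hasTailCertificate_two : HasTailCertificate 2 :=
  ⟨3 / 2, 1 / 4, 13, by norm_num, by norm_num, hasPotentialDrift_two,
    by norm_num; nlinarith [log_two_gt_d9], by norm_num⟩

lemma hasTailCertificate_three : HasTailCertificate 3 :=
  ⟨4 / 3, 1 / 18, 66, by norm_num, by norm_num, hasPotentialDrift_three,
    by norm_num; nlinarith [log_three_gt_d9], by norm_num⟩

lemma hasTailCertificate_four : HasTailCertificate 4 := by
  refine ⟨_, _, 215, ?_, ?_, hasPotentialDrift 4, ?_, ?_⟩ <;> norm_num
  rw [show (4 : ℝ) = 2 ^ 2 by norm_num, log_pow]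
  push_cast
  nlinarith [log_two_gt_d9]

lemma hasTailCertificate_of_five_le {n : ℕ} (hn : 5 ≤ n) : HasTailCertificate n := by
  have hN : (5 : ℝ) ≤ n := by exact_mod_cast hn
  refine ⟨_, _, _, ?_, ?_, hasPotentialDrift n, Nat.floor_le (by positivity), tail_estimate hn⟩
  · rw [le_div_iff₀ (by positivity)]; linarith
  · rw [div_le_one (by positivity)]; nlinarith

lemma hasTailCertificate {n : ℕ} (hn : 2 ≤ n) : HasTailCertificate n := by
  obtain rfl | rfl | rfl | h5 : n = 2 ∨ n = 3 ∨ n = 4 ∨ 5 ≤ n := by omega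
  exacts [hasTailCertificate_two, hasTailCertificate_three, hasTailCertificate_four,
    hasTailCertificate_of_five_le h5]

end Estimates

end StubbornUSD

/-- For `p = 1`, if `USD_1` is started from the configuration
`(X₁, X₂, U)(0) = (1, n-1, 0)`, then with probability at least `1 - n⁻²` the support of
Opinion 2 vanishes within `7·n²·log² n` steps. -/
theorem stmt_18 (n : ℕ) (hn : 2 ≤ n)
    (μ : Measure (ℕ → ℕ × ℕ × ℕ)) (hμ : IsUSD n 1 (1, n - 1, 0) μ) :
    1 - ((n : ℝ) ^ 2)⁻¹ ≤
      (μ {ω | ∃ t : ℕ, (t : ℝ) ≤ 7 * (n : ℝ) ^ 2 * (Real.log n) ^ 2 ∧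
            (ω t).2.1 = 0}).toReal := by
  have := hμ.1
  obtain ⟨b, δ, t, hb, hδ, hdrift, ht, hsmall⟩ := StubbornUSD.hasTailCertificate hn
  calc 1 - ((n : ℝ) ^ 2)⁻¹ ≤ 1 - (n - 1) / b * ((1 - δ) ^ t * b ^ (n - 1)) := by linarith
    _ ≤ (μ {ω | (ω t).2.1 = 0}).toReal :=
        StubbornUSD.one_sub_le_measure_of_potential_drift hn hμ hb hδ hdrift t
    _ ≤ _ := ENNReal.toReal_mono (measure_ne_top μ _)
        (measure_mono fun _ hω => by exact ⟨t, ht, hω⟩)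
end

section
/- For every p ∈ [0,1] and every configuration (x₁,x₂,u), the one-step conditional second moment of the weighted bias of USD_p satisfies the exact identity E[Δ_w(t+1)² | X(t) = (x₁,x₂,u)] = Δ_w² + ( (2−p)·(1−p)·x₁·x₂ + 2·u·Δ_w² + u·( x₁ + (1−p)²·x₂ ) )/n², where Δ_w = x₁ − (1−p)·x₂. -/
open MeasureTheory

lemma usd_hsum (p : ℝ) (x : ℕ × ℕ × ℕ) (v : ℝ) :
    Summable (fun d : ℕ × ℕ × ℕ => (if d = x then v else 0) * dw p d ^ 2) := by
  apply summable_of_ne_finset_zero (s := {x})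
  intro d hd
  simp only [Finset.mem_singleton] at hd
  simp [hd]

lemma usd_key (p : ℝ) (x : ℕ × ℕ × ℕ) (v : ℝ) :
    ∑' d : ℕ × ℕ × ℕ, (if d = x then v else 0) * dw p d ^ 2 = v * dw p x ^ 2 := by
  have : (fun d : ℕ × ℕ × ℕ => (if d = x then v else 0) * dw p d ^ 2)
      = fun d => if d = x then v * dw p x ^ 2 else 0 := by
    funext d
    by_cases h : d = x <;> simp [h]
  rw [this, tsum_ite_eq]

/-- For every `p ∈ [0,1]` and every configuration `(x₁,x₂,u)`, the
one-step conditional second moment of the weighted bias of `USD_p` satisfies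
`E[Δ_w(t+1)²] = Δ_w² + ((2-p)(1-p)·x₁·x₂ + 2·u·Δ_w² + u·(x₁ + (1-p)²·x₂))/n²`. -/
theorem stmt_19 (n : ℕ) (hn : 2 ≤ n) (p : ℝ) (hp : p ∈ Set.Icc (0 : ℝ) 1)
    (c : ℕ × ℕ × ℕ) (hc : c.1 + c.2.1 + c.2.2 = n) :
    ∑' d : ℕ × ℕ × ℕ, usdStep n p c d * (dw p d) ^ 2 =
      (dw p c) ^ 2 +
        ((2 - p) * (1 - p) * (c.1 : ℝ) * (c.2.1 : ℝ) + 2 * (c.2.2 : ℝ) * (dw p c) ^ 2 +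
          (c.2.2 : ℝ) * ((c.1 : ℝ) + (1 - p) ^ 2 * (c.2.1 : ℝ))) / (n : ℝ) ^ 2 := by
  obtain ⟨a, b, u⟩ := c
  simp only [Prod.fst, Prod.snd] at hc ⊢
  have hn0 : (n : ℝ) ≠ 0 := Nat.cast_ne_zero.mpr (by omega)
  set v1 : ℝ := (1 - p) * (a : ℝ) * (b : ℝ) / (n : ℝ) ^ 2 with hv1
  set v2 : ℝ := (a : ℝ) * (b : ℝ) / (n : ℝ) ^ 2 with hv2
  set v3 : ℝ := (u : ℝ) * (a : ℝ) / (n : ℝ) ^ 2 with hv3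
  set v4 : ℝ := (u : ℝ) * (b : ℝ) / (n : ℝ) ^ 2 with hv4
  set v5 : ℝ := 1 - ((2 - p) * (a : ℝ) * (b : ℝ) + (u : ℝ) * ((a : ℝ) + (b : ℝ))) / (n : ℝ) ^ 2 with hv5
  have expand : (fun d : ℕ × ℕ × ℕ => usdStep n p (a, b, u) d * dw p d ^ 2)
      = fun d =>
        ((((if d = ((a - 1, b, u + 1) : ℕ × ℕ × ℕ) then v1 else 0) * dw p d ^ 2 +
        (if d = ((a, b - 1, u + 1) : ℕ × ℕ × ℕ) then v2 else 0) * dw p d ^ 2) +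
        (if d = ((a + 1, b, u - 1) : ℕ × ℕ × ℕ) then v3 else 0) * dw p d ^ 2) +
        (if d = ((a, b + 1, u - 1) : ℕ × ℕ × ℕ) then v4 else 0) * dw p d ^ 2) +
        (if d = ((a, b, u) : ℕ × ℕ × ℕ) then v5 else 0) * dw p d ^ 2 := by
    funext d
    simp only [usdStep, hv1, hv2, hv3, hv4, hv5]
    ring
  rw [expand]
  have s1 := usd_hsum p ((a - 1, b, u + 1) : ℕ × ℕ × ℕ) v1
  have s2 := usd_hsum p ((a, b - 1, u + 1) : ℕ × ℕ × ℕ) v2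
  have s3 := usd_hsum p ((a + 1, b, u - 1) : ℕ × ℕ × ℕ) v3
  have s4 := usd_hsum p ((a, b + 1, u - 1) : ℕ × ℕ × ℕ) v4
  have s5 := usd_hsum p ((a, b, u) : ℕ × ℕ × ℕ) v5
  rw [Summable.tsum_add (((s1.add s2).add s3).add s4) s5,
      Summable.tsum_add ((s1.add s2).add s3) s4,
      Summable.tsum_add (s1.add s2) s3,
      Summable.tsum_add s1 s2,
      usd_key, usd_key, usd_key, usd_key, usd_key]
  simp only [dw, hv1, hv2, hv3, hv4, hv5]
  rcases Nat.eq_zero_or_pos a with ha | ha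
  · subst ha
    push_cast
    field_simp
    ring
  · rcases Nat.eq_zero_or_pos b with hb | hb
    · subst hb
      push_cast
      field_simp
      ring
    · push_cast [Nat.cast_sub ha, Nat.cast_sub hb]
      field_simp
      ring
end
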